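/- arXiv:2304.04944 — 8 statements merged into one kernel-verified Lean document; each statement's English description precedes it below -/
import Mathlib

section
/- Let b ∈ {2,3,…} be an integer, α ∈ (0,1), and let φ : [0,1] → ℝ be Hölder continuous with exponent γ ∈ (0,1] and satisfy φ(0) = φ(1). Set K := min(1, −log α / log b) and define f(t) := ∑_{n=0}^∞ αⁿ φ(⟨bⁿ t⟩) for t ∈ [0,1], where ⟨x⟩ denotes the fractional part of x. If K ≠ γ, then f is Hölder continuous on [0,1] with exponent min(K, γ); that is, there exists L > 0 such that |f(t) − f(s)| ≤ L·|t − s|^{min(K,γ)} for all s, t ∈ [0,1]. -/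
/-!
The `n`-th terms of `f t` and `f s` differ by at most `2 C αⁿ min(1, (bⁿ |t - s|)^γ)`: the
condition `φ 0 = φ 1` lets the Hölder bound pass through a jump of the fractional part. Write
`α = b^(-κ)` and `h = |t - s|`. While `bⁿ h ≤ 1` this majorant is `h^γ (α b^γ)ⁿ` with ratio
`α b^γ = b^(γ-κ)`, and afterwards it is at most `αⁿ`. If `γ < κ` the whole majorant is
`O(h^γ)`; if `κ < γ` the head is dominated by its last term and the tail by its first, both
`O(h^κ)`. As `γ ≤ 1`, `min K γ = min κ γ`.
-/

open Set

section PeriodicHolder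

variable {φ : ℝ → ℝ} {C γ : ℝ}

lemma abs_sub_le_of_holder_Icc (hC : 0 ≤ C) (hγ : 0 ≤ γ)
    (hφ : ∀ x ∈ Icc (0 : ℝ) 1, ∀ y ∈ Icc (0 : ℝ) 1, |φ x - φ y| ≤ C * |x - y| ^ γ)
    {x y : ℝ} (hx : x ∈ Icc (0 : ℝ) 1) (hy : y ∈ Icc (0 : ℝ) 1) : |φ x - φ y| ≤ C :=
  (hφ x hx y hy).trans <| mul_le_of_le_one_right hC <|
    Real.rpow_le_one (abs_nonneg _) (abs_sub_le_of_nonneg_of_le hx.1 hx.2 hy.1 hy.2) hγ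

lemma abs_comp_fract_sub_le_of_le_of_le_add_one (hC : 0 ≤ C) (hγ : 0 ≤ γ)
    (hφ : ∀ x ∈ Icc (0 : ℝ) 1, ∀ y ∈ Icc (0 : ℝ) 1, |φ x - φ y| ≤ C * |x - y| ^ γ)
    (hper : φ 0 = φ 1) {x y : ℝ} (hxy : x ≤ y) (hyx : y ≤ x + 1) :
    |φ (Int.fract x) - φ (Int.fract y)| ≤ 2 * C * (y - x) ^ γ := by
  have hmono : ∀ d, 0 ≤ d → d ≤ y - x → C * d ^ γ ≤ C * (y - x) ^ γ := fun d h0 h1 =>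
    mul_le_mul_of_nonneg_left (Real.rpow_le_rpow h0 h1 hγ) hC
  have hCd : 0 ≤ C * (y - x) ^ γ := mul_nonneg hC (Real.rpow_nonneg (by linarith) γ)
  have hfx := unitInterval.fract_mem x
  have hfy := unitInterval.fract_mem y
  rcases (Int.floor_mono hxy).eq_or_lt with hfl | hfl
  · have hd : |Int.fract x - Int.fract y| = y - x := by
      rw [Int.fract, Int.fract, hfl, sub_sub_sub_cancel_right, abs_sub_comm,
        abs_of_nonneg (by linarith)]
    calc |φ (Int.fract x) - φ (Int.fract y)| ≤ C * (y - x) ^ γ := hd ▸ hφ _ hfx _ hfy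
      _ ≤ 2 * C * (y - x) ^ γ := by linarith
  · -- the integer `⌊y⌋ ∈ (x, y]` splits `[x, y]`, and `φ 1 = φ 0` glues the two pieces
    have hfl' : ⌊y⌋ = ⌊x⌋ + 1 := le_antisymm (by simpa using Int.floor_mono hyx) hfl
    have hxm : x < ⌊y⌋ := by rw [hfl']; push_cast; exact Int.lt_floor_add_one x
    have hmy : (⌊y⌋ : ℝ) ≤ y := Int.floor_le y
    have h1 : |φ (Int.fract x) - φ 1| ≤ C * (y - x) ^ γ := by
      have hd : |Int.fract x - 1| = ⌊y⌋ - x := by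
        rw [Int.fract, hfl', abs_sub_comm]; push_cast
        rw [show (1 : ℝ) - (x - ⌊x⌋) = ⌊x⌋ + 1 - x by ring]
        exact abs_of_nonneg (by linarith [Int.lt_floor_add_one x])
      exact (hφ _ hfx 1 (by simp)).trans (hd ▸ hmono _ (by linarith) (by linarith))
    have h2 : |φ (Int.fract y) - φ 0| ≤ C * (y - x) ^ γ := by
      have hd : |Int.fract y - 0| = y - ⌊y⌋ := by
        rw [sub_zero, abs_of_nonneg (Int.fract_nonneg y), Int.fract]
      exact (hφ _ hfy 0 (by simp)).trans (hd ▸ hmono _ (by linarith) (by linarith))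
    calc |φ (Int.fract x) - φ (Int.fract y)|
        ≤ |φ (Int.fract x) - φ 1| + |φ (Int.fract y) - φ 0| := by
          rw [← hper, abs_sub_comm (φ (Int.fract y))]; exact abs_sub_le _ _ _
      _ ≤ 2 * C * (y - x) ^ γ := by linarith

lemma abs_comp_fract_sub_le (hC : 0 ≤ C) (hγ : 0 ≤ γ)
    (hφ : ∀ x ∈ Icc (0 : ℝ) 1, ∀ y ∈ Icc (0 : ℝ) 1, |φ x - φ y| ≤ C * |x - y| ^ γ)
    (hper : φ 0 = φ 1) (x y : ℝ) :
    |φ (Int.fract x) - φ (Int.fract y)| ≤ 2 * C * min 1 (|x - y| ^ γ) := by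
  wlog hxy : x ≤ y generalizing x y
  · rw [abs_sub_comm, abs_sub_comm x]; exact this y x (le_of_not_ge hxy)
  have hbdd : |φ (Int.fract x) - φ (Int.fract y)| ≤ 2 * C := by
    linarith [abs_sub_le_of_holder_Icc hC hγ hφ (unitInterval.fract_mem x)
      (unitInterval.fract_mem y)]
  rw [abs_sub_comm x, abs_of_nonneg (sub_nonneg.2 hxy)]
  rcases le_or_gt (y - x) 1 with h1 | h1
  · rw [mul_min_of_nonneg _ _ (by positivity), mul_one]
    exact le_min hbdd (abs_comp_fract_sub_le_of_le_of_le_add_one hC hγ hφ hper hxy (by linarith))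
  · rwa [min_eq_left (Real.one_le_rpow h1.le hγ), mul_one]

end PeriodicHolder

lemma summable_pow_mul_of_abs_le {α M : ℝ} (hα0 : 0 ≤ α) (hα1 : α < 1) {u : ℕ → ℝ}
    (hu : ∀ n, |u n| ≤ M) : Summable fun n ↦ α ^ n * u n :=
  .of_norm_bounded ((summable_geometric_of_lt_one hα0 hα1).mul_right M) fun n ↦ by
    rw [Real.norm_eq_abs, abs_mul, abs_pow, abs_of_nonneg hα0]
    exact mul_le_mul_of_nonneg_left (hu n) (pow_nonneg hα0 n)

lemma abs_tsum_sub_tsum_le {ι : Type*} {a c g : ι → ℝ} (ha : Summable a) (hc : Summable c)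
    (hg : Summable g) (h : ∀ i, |a i - c i| ≤ g i) : |∑' i, a i - ∑' i, c i| ≤ ∑' i, g i := by
  rw [← ha.tsum_sub hc, abs_le, ← tsum_neg]
  exact ⟨hg.neg.tsum_le_tsum (fun i ↦ (abs_le.1 (h i)).1) (ha.sub hc),
    (ha.sub hc).tsum_le_tsum (fun i ↦ (abs_le.1 (h i)).2) hg⟩

lemma abs_tsum_pow_mul_comp_fract_sub_le {φ : ℝ → ℝ} {b α C γ : ℝ} (hb : 0 ≤ b)
    (hα0 : 0 ≤ α) (hα1 : α < 1) (hC : 0 ≤ C) (hγ : 0 ≤ γ)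
    (hφ : ∀ x ∈ Icc (0 : ℝ) 1, ∀ y ∈ Icc (0 : ℝ) 1, |φ x - φ y| ≤ C * |x - y| ^ γ)
    (hper : φ 0 = φ 1) (s t : ℝ) :
    |∑' n : ℕ, α ^ n * φ (Int.fract (b ^ n * t)) - ∑' n : ℕ, α ^ n * φ (Int.fract (b ^ n * s))|
      ≤ 2 * C * ∑' n : ℕ, α ^ n * min 1 ((b ^ n * |t - s|) ^ γ) := by
  have hsummable (u : ℝ) : Summable fun n : ℕ ↦ α ^ n * φ (Int.fract (b ^ n * u)) := by
    refine summable_pow_mul_of_abs_le hα0 hα1 (M := C + |φ 0|) fun n ↦ ?_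
    have := abs_sub_le_of_holder_Icc hC hγ hφ (unitInterval.fract_mem (b ^ n * u))
      (y := 0) (by simp)
    linarith [abs_sub_abs_le_abs_sub (φ (Int.fract (b ^ n * u))) (φ 0)]
  have hmin (n : ℕ) : |min 1 ((b ^ n * |t - s|) ^ γ)| ≤ 1 := by
    rw [abs_of_nonneg (by positivity)]; exact min_le_left _ _
  rw [← tsum_mul_left]
  refine abs_tsum_sub_tsum_le (hsummable t) (hsummable s)
    ((summable_pow_mul_of_abs_le hα0 hα1 hmin).mul_left _) fun n ↦ ?_
  have := abs_comp_fract_sub_le hC hγ hφ hper (b ^ n * t) (b ^ n * s)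
  rw [← mul_sub, abs_mul, abs_of_nonneg (pow_nonneg hb n)] at this
  rw [← mul_sub, abs_mul, abs_of_nonneg (by positivity)]
  calc α ^ n * |φ (Int.fract (b ^ n * t)) - φ (Int.fract (b ^ n * s))|
      ≤ α ^ n * (2 * C * min 1 ((b ^ n * |t - s|) ^ γ)) := by gcongr
    _ = _ := by ring

section GeometricMajorant

variable {α b γ κ h : ℝ}

lemma pow_mul_min_one_rpow_le (hb : 0 ≤ b) (hh : 0 ≤ h) (hα : 0 ≤ α) (n : ℕ) :
    α ^ n * min 1 ((b ^ n * h) ^ γ) ≤ (α * b ^ γ) ^ n * h ^ γ :=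
  calc α ^ n * min 1 ((b ^ n * h) ^ γ) ≤ α ^ n * (b ^ n * h) ^ γ := by
        gcongr; exact min_le_right _ _
    _ = (α * b ^ γ) ^ n * h ^ γ := by
        rw [Real.mul_rpow (by positivity) hh, ← Real.rpow_pow_comm hb, mul_pow, mul_assoc]

lemma tsum_pow_mul_min_one_rpow_le_of_mul_lt_one (hb : 0 ≤ b) (hh : 0 ≤ h) (hα : 0 ≤ α)
    (hβ : α * b ^ γ < 1) :
    ∑' n : ℕ, α ^ n * min 1 ((b ^ n * h) ^ γ) ≤ (1 - α * b ^ γ)⁻¹ * h ^ γ := by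
  have hgeom := (summable_geometric_of_lt_one (by positivity) hβ).mul_right (h ^ γ)
  have hterm := pow_mul_min_one_rpow_le (γ := γ) hb hh hα
  calc ∑' n : ℕ, α ^ n * min 1 ((b ^ n * h) ^ γ) ≤ ∑' n : ℕ, (α * b ^ γ) ^ n * h ^ γ :=
        (hgeom.of_nonneg_of_le (fun n ↦ by positivity) hterm).tsum_le_tsum hterm hgeom
    _ = (1 - α * b ^ γ)⁻¹ * h ^ γ := by
        rw [tsum_mul_right, tsum_geometric_of_lt_one (by positivity) hβ]

lemma tsum_pow_mul_min_one_rpow_le_of_lt (hb : 1 < b) (hκ : 0 < κ) (hκγ : κ < γ)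
    (hα : b ^ (-κ) = α) (hh0 : 0 < h) (hh1 : h ≤ 1) :
    ∑' n : ℕ, α ^ n * min 1 ((b ^ n * h) ^ γ)
      ≤ (α * b ^ γ / (α * b ^ γ - 1) + (1 - α)⁻¹) * h ^ κ := by
  have hb0 : 0 ≤ b := by linarith
  have hα0 : 0 < α := hα ▸ Real.rpow_pos_of_pos (by linarith) _
  have hα1 : α < 1 := hα ▸ Real.rpow_lt_one_of_one_lt_of_neg hb (by linarith)
  have hpow (n : ℕ) : α ^ n = (b ^ n) ^ (-κ) := by rw [← hα, Real.rpow_pow_comm hb0]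
  set β := α * b ^ γ with hβdef
  have hβ : β = b ^ (γ - κ) := by rw [hβdef, ← hα, ← Real.rpow_add (by linarith)]; ring_nf
  have hβ1 : 1 < β := hβ ▸ Real.one_lt_rpow hb (by linarith)
  have hmin (n : ℕ) : |min 1 ((b ^ n * h) ^ γ)| ≤ 1 := by
    rw [abs_of_nonneg (by positivity)]; exact min_le_left _ _
  have hsum := summable_pow_mul_of_abs_le hα0.le hα1 hmin
  -- split the series where `b ^ n * h` crosses `1`
  obtain ⟨N, hN, hN1⟩ := exists_nat_pow_near ((one_le_inv₀ hh0).2 hh1) hb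
  have hhead : ∑ n ∈ Finset.range (N + 1), α ^ n * min 1 ((b ^ n * h) ^ γ)
      ≤ β / (β - 1) * h ^ κ := by
    have hβN : β ^ N * h ^ γ ≤ h ^ κ :=
      calc β ^ N * h ^ γ = (b ^ N) ^ (γ - κ) * h ^ γ := by
            rw [hβ, Real.rpow_pow_comm hb0]
        _ ≤ h⁻¹ ^ (γ - κ) * h ^ γ := by gcongr
        _ = h ^ κ := by
            rw [Real.inv_rpow hh0.le, Real.rpow_sub hh0]
            field_simp
    calc ∑ n ∈ Finset.range (N + 1), α ^ n * min 1 ((b ^ n * h) ^ γ)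
        ≤ ∑ n ∈ Finset.range (N + 1), β ^ n * h ^ γ :=
          Finset.sum_le_sum fun n _ ↦ pow_mul_min_one_rpow_le hb0 hh0.le hα0.le n
      _ = (β ^ (N + 1) - 1) / (β - 1) * h ^ γ := by
          rw [← Finset.sum_mul, geom_sum_eq hβ1.ne']
      _ ≤ β ^ (N + 1) / (β - 1) * h ^ γ := by gcongr; linarith
      _ = β / (β - 1) * (β ^ N * h ^ γ) := by ring
      _ ≤ β / (β - 1) * h ^ κ := by gcongr
  have htail : ∑' n : ℕ, α ^ (n + (N + 1)) * min 1 ((b ^ (n + (N + 1)) * h) ^ γ)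
      ≤ (1 - α)⁻¹ * h ^ κ := by
    have hαN : α ^ (N + 1) ≤ h ^ κ :=
      calc α ^ (N + 1) = (b ^ (N + 1)) ^ (-κ) := hpow _
        _ ≤ h⁻¹ ^ (-κ) := Real.rpow_le_rpow_of_nonpos (by positivity) hN1.le (by linarith)
        _ = h ^ κ := by rw [Real.inv_rpow hh0.le, Real.rpow_neg hh0.le, inv_inv]
    have hgeom := (summable_geometric_of_lt_one hα0.le hα1).mul_left (α ^ (N + 1))
    have hterm (n : ℕ) : α ^ (n + (N + 1)) * min 1 ((b ^ (n + (N + 1)) * h) ^ γ)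
        ≤ α ^ (N + 1) * α ^ n := by
      rw [pow_add, mul_comm (α ^ n), mul_assoc]
      exact mul_le_mul_of_nonneg_left
        (mul_le_of_le_one_right (pow_nonneg hα0.le n) (min_le_left _ _)) (pow_nonneg hα0.le _)
    calc ∑' n : ℕ, α ^ (n + (N + 1)) * min 1 ((b ^ (n + (N + 1)) * h) ^ γ)
        ≤ ∑' n : ℕ, α ^ (N + 1) * α ^ n :=
          ((summable_nat_add_iff (N + 1)).2 hsum).tsum_le_tsum hterm hgeom
      _ = (1 - α)⁻¹ * α ^ (N + 1) := by
          rw [tsum_mul_left, tsum_geometric_of_lt_one hα0.le hα1, mul_comm]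
      _ ≤ (1 - α)⁻¹ * h ^ κ := by gcongr
  rw [← hsum.sum_add_tsum_nat_add (N + 1), add_mul]
  exact add_le_add hhead htail

lemma exists_tsum_pow_mul_min_one_rpow_le (hb : 1 < b) (hκ : 0 < κ) (hne : κ ≠ γ)
    (hα : b ^ (-κ) = α) :
    ∃ L > 0, ∀ h ∈ Ioc (0 : ℝ) 1,
      ∑' n : ℕ, α ^ n * min 1 ((b ^ n * h) ^ γ) ≤ L * h ^ min κ γ := by
  have hβ : α * b ^ γ = b ^ (γ - κ) := by rw [← hα, ← Real.rpow_add (by linarith)]; ring_nf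
  rcases hne.lt_or_gt with hκγ | hγκ
  · have hα1 : α < 1 := hα ▸ Real.rpow_lt_one_of_one_lt_of_neg hb (by linarith)
    have hβ1 : 1 < α * b ^ γ := hβ ▸ Real.one_lt_rpow hb (by linarith)
    refine ⟨α * b ^ γ / (α * b ^ γ - 1) + (1 - α)⁻¹,
      add_pos (div_pos (by linarith) (by linarith)) (inv_pos.2 (by linarith)), fun h hh ↦ ?_⟩
    rw [min_eq_left hκγ.le]
    exact tsum_pow_mul_min_one_rpow_le_of_lt hb hκ hκγ hα hh.1 hh.2
  · have hβ1 : α * b ^ γ < 1 := hβ ▸ Real.rpow_lt_one_of_one_lt_of_neg hb (by linarith)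
    refine ⟨(1 - α * b ^ γ)⁻¹, inv_pos.2 (by linarith), fun h hh ↦ ?_⟩
    rw [min_eq_right hγκ.le]
    exact tsum_pow_mul_min_one_rpow_le_of_mul_lt_one (by linarith) hh.1.le
      (hα ▸ Real.rpow_nonneg (by linarith) _) hβ1

end GeometricMajorant

/-- Proposition A.1 (a): if `K ≠ γ`, the fractal function
`f(t) = ∑ αⁿ φ(⟨bⁿ t⟩)` is Hölder continuous with exponent `min K γ`. -/
theorem fractal_holder_of_ne (b : ℕ) (hb : 2 ≤ b) (α γ : ℝ)
    (hα : α ∈ Set.Ioo (0 : ℝ) 1) (hγ0 : 0 < γ) (hγ1 : γ ≤ 1)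
    (φ : ℝ → ℝ) (C : ℝ) (hC : 0 < C)
    (hHolder : ∀ x ∈ Set.Icc (0 : ℝ) 1, ∀ y ∈ Set.Icc (0 : ℝ) 1,
      |φ x - φ y| ≤ C * |x - y| ^ γ)
    (hφ : φ 0 = φ 1)
    (K : ℝ) (hK : K = min 1 (-Real.log α / Real.log b))
    (f : ℝ → ℝ)
    (hf : ∀ t, f t = ∑' n : ℕ, α ^ n * φ (Int.fract ((b : ℝ) ^ n * t)))
    (hne : K ≠ γ) :
    ∃ L > 0, ∀ s ∈ Set.Icc (0 : ℝ) 1, ∀ t ∈ Set.Icc (0 : ℝ) 1,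
      |f t - f s| ≤ L * |t - s| ^ (min K γ) := by
  obtain ⟨hα0, hα1⟩ := hα
  have hb1 : (1 : ℝ) < b := by exact_mod_cast hb
  set κ := -Real.log α / Real.log b
  have hκ : 0 < κ := div_pos (neg_pos.2 (Real.log_neg hα0 hα1)) (Real.log_pos hb1)
  have hbκ : (b : ℝ) ^ (-κ) = α := by
    simp only [κ, neg_div, neg_neg, Real.log_div_log]
    exact Real.rpow_logb (by linarith) hb1.ne' hα0
  have hmin : min K γ = min κ γ := by rw [hK, min_assoc, min_eq_right (min_le_of_right_le hγ1)]
  have hκγ : κ ≠ γ := fun h ↦ hne (by rw [hK, h, min_eq_right hγ1])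
  obtain ⟨L, hL, hbound⟩ := exists_tsum_pow_mul_min_one_rpow_le hb1 hκ hκγ hbκ
  refine ⟨2 * C * L, by positivity, fun s hs t ht ↦ ?_⟩
  rcases eq_or_ne t s with rfl | hts
  · simp only [sub_self, abs_zero]; positivity
  have hd : |t - s| ∈ Ioc (0 : ℝ) 1 :=
    ⟨abs_pos.2 (sub_ne_zero.2 hts), abs_sub_le_of_nonneg_of_le ht.1 ht.2 hs.1 hs.2⟩
  rw [hf, hf, hmin]
  calc _ ≤ 2 * C * ∑' n : ℕ, α ^ n * min 1 (((b : ℝ) ^ n * |t - s|) ^ γ) :=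
        abs_tsum_pow_mul_comp_fract_sub_le (by positivity) hα0.le hα1 hC.le hγ0.le hHolder hφ s t
    _ ≤ 2 * C * (L * |t - s| ^ min κ γ) := by gcongr; exact hbound _ hd
    _ = 2 * C * L * |t - s| ^ min κ γ := by ring
end

section
/- Let b ∈ {2,3,…}, let α ∈ (0,1) and γ ∈ (0,1] be such that α·b^γ > 1, and let φ : [0,1] → ℝ be Hölder continuous with exponent γ and satisfy φ(0) = φ(1). Define f(t) := ∑_{n=0}^∞ αⁿ φ(⟨bⁿ t⟩), let p := −log b / log α (so that α^p b = 1), let U₁, U₂, … be independent uniform random variables on {0,…,b−1}, R_m := ∑_{i=1}^m U_i b^{i−1}, and Z := ∑_{m=1}^∞ α^{−m}·(φ((R_m + 1)·b^{−m}) − φ(R_m·b^{−m})). Then for every t ∈ [0,1], the limit lim_{n→∞} ∑_{k=0}^{⌊t·bⁿ⌋} |f((k+1)·b^{−n}) − f(k·b^{−n})|^p exists and equals t·E[|Z|^p]. -/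
/-!
The increment of `f` over `[k b⁻ⁿ, (k + 1) b⁻ⁿ]` is `αⁿ G_n(k)` with
`G_n(k) = ∑_{m<n} α^{-(m+1)} (φ((r_m + 1) b^{-(m+1)}) - φ(r_m b^{-(m+1)}))`, `r_m = k mod b^{m+1}`:
the levels `m ≥ n` cancel, and `φ(0) = φ(1)` absorbs the carries. As `α^p b = 1`, the variation
sum is the average `b⁻ⁿ ∑_{k ≤ t bⁿ} |G_n(k)|^p`. Because `α b^γ > 1`, the series defining `G_n(k)`
and `Z` converge geometrically, uniformly in `k` and `ω`, so one may freeze the level at `N`: then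
`G_N(k)` depends only on `k mod b^N`, its average over `k ≤ t bⁿ` tends to `t` times its mean over
one period, and that mean is `E|G_N(R_N)|^p` because `R_N` is uniform on `{0, …, b^N - 1}`.
-/

open MeasureTheory ProbabilityTheory Filter Finset
open scoped ENNReal NNReal Topology

lemma abs_rpow_sub_abs_rpow_le {p M x y : ℝ} (hp : 1 ≤ p) (hx : |x| ≤ M) (hy : |y| ≤ M) :
    |(|x| ^ p - |y| ^ p)| ≤ p * M ^ (p - 1) * |x - y| := by
  have hderiv : ∀ z ∈ Set.Icc 0 M,
      HasDerivWithinAt (fun z : ℝ => z ^ p) (p * z ^ (p - 1)) (Set.Icc 0 M) z :=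
    fun z _ => (Real.hasDerivAt_rpow_const (Or.inr hp)).hasDerivWithinAt
  have hbound : ∀ z ∈ Set.Icc 0 M, ‖p * z ^ (p - 1)‖ ≤ p * M ^ (p - 1) := fun z hz => by
    rw [Real.norm_eq_abs, abs_of_nonneg (by have := hz.1; positivity)]
    exact mul_le_mul_of_nonneg_left (Real.rpow_le_rpow hz.1 hz.2 (by linarith)) (by linarith)
  have := (convex_Icc 0 M).norm_image_sub_le_of_norm_hasDerivWithin_le hderiv hbound
    ⟨abs_nonneg y, hy⟩ ⟨abs_nonneg x, hx⟩
  simp only [Real.norm_eq_abs] at this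
  have hM : 0 ≤ M := (abs_nonneg x).trans hx
  exact this.trans (mul_le_mul_of_nonneg_left (abs_abs_sub_abs_le_abs_sub x y) (by positivity))

section GeometricBound

variable {E : Type*} [NormedAddCommGroup E] [CompleteSpace E] {f : ℕ → E} {C r : ℝ}

lemma norm_sum_range_sub_tsum_le_of_geometric_bound (hr : r < 1)
    (hf : ∀ n, ‖f n‖ ≤ C * r ^ n) (n : ℕ) :
    ‖∑ i ∈ range n, f i - ∑' i, f i‖ ≤ C * r ^ n / (1 - r) :=
  norm_sub_le_of_geometric_bound_of_hasSum hr hf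
    (summable_iff_cauchySeq_finset.2 (cauchySeq_finset_of_geometric_bound hr hf)).hasSum n

lemma norm_sum_range_sub_sum_range_le_of_geometric_bound (hr0 : 0 ≤ r) (hr : r < 1)
    (hf : ∀ n, ‖f n‖ ≤ C * r ^ n) {N n : ℕ} (hNn : N ≤ n) :
    ‖∑ i ∈ range n, f i - ∑ i ∈ range N, f i‖ ≤ 2 * C * r ^ N / (1 - r) := by
  have hC : 0 ≤ C := by simpa using (norm_nonneg _).trans (hf 0)
  have hrn : C * r ^ n / (1 - r) ≤ C * r ^ N / (1 - r) :=
    div_le_div_of_nonneg_right (mul_le_mul_of_nonneg_left (pow_le_pow_of_le_one hr0 hr.le hNn) hC)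
      (by linarith)
  calc ‖∑ i ∈ range n, f i - ∑ i ∈ range N, f i‖
      ≤ ‖∑ i ∈ range n, f i - ∑' i, f i‖ + ‖∑ i ∈ range N, f i - ∑' i, f i‖ := by
        rw [norm_sub_rev (∑ i ∈ range N, f i)]; exact norm_sub_le_norm_sub_add_norm_sub ..
    _ ≤ C * r ^ N / (1 - r) + C * r ^ N / (1 - r) := by
      linarith [norm_sum_range_sub_tsum_le_of_geometric_bound hr hf n,
        norm_sum_range_sub_tsum_le_of_geometric_bound hr hf N]
    _ = 2 * C * r ^ N / (1 - r) := by ring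

end GeometricBound

lemma tendsto_of_tendsto_approx {ι X : Type*} [PseudoMetricSpace X] {l : Filter ι}
    {a : ι → X} {u : ℕ → ι → X} {c : ℕ → X} {x : X} {δ : ℕ → ℝ}
    (hδ : Tendsto δ atTop (𝓝 0)) (hc : Tendsto c atTop (𝓝 x))
    (hu : ∀ N, Tendsto (u N) l (𝓝 (c N))) (hau : ∀ N, ∀ᶠ i in l, dist (a i) (u N i) ≤ δ N) :
    Tendsto a l (𝓝 x) := by
  refine Metric.tendsto_nhds.2 fun ε hε => ?_
  obtain ⟨N, hδN, hcN⟩ := ((hδ.eventually (gt_mem_nhds (by linarith : 0 < ε / 3))).and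
    (Metric.tendsto_nhds.1 hc _ (by linarith : 0 < ε / 3))).exists
  filter_upwards [hau N, Metric.tendsto_nhds.1 (hu N) _ (by linarith : 0 < ε / 3)]
    with i hai hui
  calc dist (a i) x ≤ dist (a i) (u N i) + dist (u N i) (c N) + dist (c N) x := dist_triangle4 ..
    _ < ε := by linarith

lemma abs_sum_range_mod_sub_le (h : ℕ → ℝ) {L : ℕ} (hL : 0 < L) (K : ℕ) :
    |∑ k ∈ range K, h (k % L) - K * ((∑ r ∈ range L, h r) / L)| ≤
      2 * ∑ r ∈ range L, |h r| := by
  set A := (∑ r ∈ range L, h r) / L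
  have hLR : (0 : ℝ) < L := by exact_mod_cast hL
  induction K using Nat.strong_induction_on with
  | _ K ih =>
  rcases lt_or_ge K L with hKL | hLK
  · have hsum : ∑ k ∈ range K, h (k % L) = ∑ k ∈ range K, h k :=
      sum_congr rfl fun k hk => by rw [Nat.mod_eq_of_lt ((mem_range.1 hk).trans hKL)]
    have hpart : |∑ k ∈ range K, h k| ≤ ∑ r ∈ range L, |h r| :=
      (abs_sum_le_sum_abs _ _).trans
        (sum_le_sum_of_subset_of_nonneg (range_mono hKL.le) fun _ _ _ => abs_nonneg _)
    have hmean : |K * A| ≤ ∑ r ∈ range L, |h r| := by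
      rw [abs_mul, Nat.abs_cast, abs_div, Nat.abs_cast, ← mul_div_assoc, div_le_iff₀ hLR]
      have hKL' : (K : ℝ) ≤ L := by exact_mod_cast hKL.le
      nlinarith [abs_sum_le_sum_abs h (range L), abs_nonneg (∑ r ∈ range L, h r)]
    rw [hsum]
    exact (abs_sub _ _).trans (by linarith)
  · obtain ⟨K, rfl⟩ : ∃ K', K = L + K' := ⟨K - L, by omega⟩
    have hsum : ∑ k ∈ range (L + K), h (k % L) = L * A + ∑ k ∈ range K, h (k % L) := by
      rw [sum_range_add, mul_div_cancel₀ _ hLR.ne']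
      congr 1
      · exact sum_congr rfl fun k hk => by rw [Nat.mod_eq_of_lt (mem_range.1 hk)]
      · exact sum_congr rfl fun k _ => by rw [Nat.add_mod_left]
    rw [hsum, Nat.cast_add, add_mul, add_sub_add_left_eq_sub]
    exact ih K (by omega)

lemma tendsto_sum_range_mod_div {ι : Type*} {l : Filter ι} (h : ℕ → ℝ) {L : ℕ} (hL : 0 < L)
    {K : ι → ℕ} {s : ι → ℝ} {t : ℝ} (hs : Tendsto s l atTop)
    (hK : Tendsto (fun i => (K i : ℝ) / s i) l (𝓝 t)) :
    Tendsto (fun i => (∑ k ∈ range (K i), h (k % L)) / s i) l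
      (𝓝 (t * ((∑ r ∈ range L, h r) / L))) := by
  set A := (∑ r ∈ range L, h r) / L
  have herr : Tendsto (fun i => (∑ k ∈ range (K i), h (k % L) - K i * A) / s i) l (𝓝 0) := by
    refine squeeze_zero_norm' ?_
      ((tendsto_const_nhds (x := 2 * ∑ r ∈ range L, |h r|)).div_atTop hs)
    filter_upwards [hs.eventually_gt_atTop 0] with i hi
    rw [Real.norm_eq_abs, abs_div, abs_of_pos hi]
    exact div_le_div_of_nonneg_right (abs_sum_range_mod_sub_le h hL (K i)) hi.le
  have := (hK.mul_const A).add herr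
  rw [add_zero] at this
  refine this.congr' ?_
  filter_upwards [hs.eventually_gt_atTop 0] with i hi
  field_simp
  ring

lemma tendsto_nat_floor_mul_add_one_div {ι : Type*} {l : Filter ι} {s : ι → ℝ}
    (hs : Tendsto s l atTop) {t : ℝ} (ht : 0 ≤ t) :
    Tendsto (fun i => ((⌊t * s i⌋₊ + 1 : ℕ) : ℝ) / s i) l (𝓝 t) := by
  have := ((tendsto_nat_floor_mul_div_atTop ht).comp hs).add (tendsto_inv_atTop_zero.comp hs)
  rw [add_zero] at this
  refine this.congr' ?_
  filter_upwards with i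
  simp [add_div]

section Digits

variable {b : ℕ} {u : ℕ → ℕ}

lemma sum_digits_lt (hu : ∀ i, u i < b) (N : ℕ) : ∑ i ∈ range N, u i * b ^ i < b ^ N := by
  induction N with
  | zero => simp
  | succ N ih =>
    rw [sum_range_succ, pow_succ]
    nlinarith [Nat.mul_le_mul_right (b ^ N) (hu N)]

lemma sum_digits_mod_pow (hu : ∀ i, u i < b) {m N : ℕ} (hmN : m ≤ N) :
    (∑ i ∈ range N, u i * b ^ i) % b ^ m = ∑ i ∈ range m, u i * b ^ i := by
  induction N, hmN using Nat.le_induction with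
  | base => exact Nat.mod_eq_of_lt (sum_digits_lt hu m)
  | succ N hmN ih =>
    obtain ⟨c, hc⟩ : b ^ m ∣ u N * b ^ N := (pow_dvd_pow b hmN).mul_left _
    rw [sum_range_succ, hc, Nat.add_mul_mod_self_left, ih]

lemma sum_digits_div_pow_mod (hu : ∀ i, u i < b) {j N : ℕ} (hjN : j < N) :
    (∑ i ∈ range N, u i * b ^ i) / b ^ j % b = u j := by
  have hb : 0 < b ^ j := pow_pos ((Nat.zero_le _).trans_lt (hu j)) j
  rw [← Nat.mod_mul_right_div_self, ← pow_succ, sum_digits_mod_pow hu hjN, sum_range_succ,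
    Nat.add_mul_div_right _ _ hb, Nat.div_eq_of_lt (sum_digits_lt hu j), zero_add]

lemma sum_digits_eq_mod_pow (b r N : ℕ) : ∑ i ∈ range N, r / b ^ i % b * b ^ i = r % b ^ N := by
  induction N with
  | zero => simp [Nat.mod_one]
  | succ N ih => rw [sum_range_succ, ih, Nat.mod_pow_succ, mul_comm (b ^ N)]

end Digits

section UniformDigits

variable {Ω : Type*} [MeasurableSpace Ω] {P : Measure Ω} {b : ℕ} {U : ℕ → Ω → ℕ}

lemma measure_sum_digits_eq (hb : 0 < b) (hUlt : ∀ i ω, U i ω < b)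
    (hUunif : ∀ i, ∀ j < b, P {ω | U i ω = j} = (b : ℝ≥0∞)⁻¹) (hUindep : iIndepFun U P)
    {N r : ℕ} (hr : r < b ^ N) :
    P {ω | ∑ i ∈ range N, U i ω * b ^ i = r} = ((b : ℝ≥0∞) ^ N)⁻¹ := by
  have hset : {ω | ∑ i ∈ range N, U i ω * b ^ i = r} = ⋂ i ∈ range N, U i ⁻¹' {r / b ^ i % b} := by
    ext ω
    simp only [Set.mem_ofPred_eq, Set.mem_iInter, Set.mem_preimage, Set.mem_singleton_iff,
      mem_range]
    constructor
    · rintro rfl i hi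
      exact (sum_digits_div_pow_mod (hUlt · ω) hi).symm
    · intro hdigits
      rw [sum_congr rfl fun i hi => by rw [hdigits i (mem_range.1 hi)], sum_digits_eq_mod_pow,
        Nat.mod_eq_of_lt hr]
  have hdigit : ∀ i ∈ range N, P (U i ⁻¹' {r / b ^ i % b}) = (b : ℝ≥0∞)⁻¹ :=
    fun i _ => hUunif i _ (Nat.mod_lt _ hb)
  rw [hset, hUindep.measure_inter_preimage_eq_mul _ fun _ _ => measurableSet_singleton _,
    prod_congr rfl hdigit, prod_const, card_range, ENNReal.inv_pow]

lemma integral_comp_eq_sum {g : Ω → ℕ} (hg : Measurable g) [IsFiniteMeasure P] {L : ℕ}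
    (hgL : ∀ ω, g ω < L) (h : ℕ → ℝ) :
    ∫ ω, h (g ω) ∂P = ∑ r ∈ range L, P.real {ω | g ω = r} * h r := by
  have hsplit : ∀ ω, h (g ω) = ∑ r ∈ range L, (g ⁻¹' {r}).indicator (fun _ => h r) ω := by
    intro ω
    rw [sum_eq_single_of_mem (g ω) (mem_range.2 (hgL ω)) fun r _ hr =>
      Set.indicator_of_notMem (fun h => hr h.symm) _]
    simp
  simp_rw [hsplit]
  rw [integral_finsetSum _ fun r _ =>
    (integrable_const (h r)).indicator (hg (measurableSet_singleton r))]
  exact sum_congr rfl fun r _ => by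
    rw [integral_indicator_const _ (hg (measurableSet_singleton r)), smul_eq_mul]; rfl

lemma measurable_sum_digits (hUmeas : ∀ i, Measurable (U i)) (N : ℕ) :
    Measurable fun ω => ∑ i ∈ range N, U i ω * b ^ i := by
  fun_prop

lemma integral_comp_sum_digits [IsFiniteMeasure P] (hb : 0 < b) (hUmeas : ∀ i, Measurable (U i))
    (hUlt : ∀ i ω, U i ω < b) (hUunif : ∀ i, ∀ j < b, P {ω | U i ω = j} = (b : ℝ≥0∞)⁻¹)
    (hUindep : iIndepFun U P) (N : ℕ) (h : ℕ → ℝ) :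
    ∫ ω, h (∑ i ∈ range N, U i ω * b ^ i) ∂P = (∑ r ∈ range (b ^ N), h r) / b ^ N := by
  rw [integral_comp_eq_sum (measurable_sum_digits hUmeas N)
    (fun ω => sum_digits_lt (hUlt · ω) N), sum_div]
  refine sum_congr rfl fun r hr => ?_
  rw [measureReal_def, measure_sum_digits_eq hb hUlt hUunif hUindep (mem_range.1 hr)]
  simp [div_eq_inv_mul]

end UniformDigits

noncomputable def levelIncrement (α : ℝ) (b : ℕ) (φ : ℝ → ℝ) (m r : ℕ) : ℝ :=
  (α ^ (m + 1))⁻¹ * (φ (((r : ℝ) + 1) / (b : ℝ) ^ (m + 1)) - φ ((r : ℝ) / (b : ℝ) ^ (m + 1)))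

/-- `G_n(k)` of the header when `d = levelIncrement α b φ`. -/
def scaledIncrement (b : ℕ) (d : ℕ → ℕ → ℝ) (n k : ℕ) : ℝ :=
  ∑ m ∈ range n, d m (k % b ^ (m + 1))

section Fractal

variable {φ : ℝ → ℝ}

lemma comp_fract_of_mem_Icc (hφ : φ 0 = φ 1) {x : ℝ} (hx : x ∈ Set.Icc 0 1) :
    φ (Int.fract x) = φ x := by
  rcases hx.2.lt_or_eq with hx1 | rfl
  · rw [Int.fract_eq_self.2 ⟨hx.1, hx1⟩]
  · simpa using hφ

lemma comp_fract_natCast_add_div (hφ : φ 0 = φ 1) {L : ℕ} (hL : 0 < L) (k : ℕ) {c : ℝ}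
    (hc : c ∈ Set.Icc 0 1) :
    φ (Int.fract ((k + c) / L)) = φ (((k % L : ℕ) + c) / L) := by
  have hLR : (0 : ℝ) < L := by exact_mod_cast hL
  have hsplit : ((k : ℝ) + c) / L = ((k / L : ℕ) : ℝ) + ((k % L : ℕ) + c) / L := by
    conv_lhs => rw [← Nat.div_add_mod k L]
    push_cast
    field_simp
    ring
  have hmod : ((k % L : ℕ) : ℝ) + 1 ≤ L := by exact_mod_cast Nat.mod_lt k hL
  rw [hsplit, Int.fract_natCast_add]
  exact comp_fract_of_mem_Icc hφ ⟨by have := hc.1; positivity,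
    (div_le_one hLR).2 (by linarith [hc.2])⟩

variable {α : ℝ} {b : ℕ} {B : ℝ}

lemma summable_fractalSeries (hα0 : 0 ≤ α) (hα1 : α < 1) (hφB : ∀ x ∈ Set.Icc 0 1, |φ x| ≤ B)
    (x : ℝ) : Summable fun n : ℕ => α ^ n * φ (Int.fract ((b : ℝ) ^ n * x)) := by
  refine .of_norm_bounded ((summable_geometric_of_lt_one hα0 hα1).mul_left B) fun n => ?_
  rw [norm_mul, norm_pow, Real.norm_of_nonneg hα0, Real.norm_eq_abs, mul_comm]
  exact mul_le_mul_of_nonneg_right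
    (hφB _ ⟨Int.fract_nonneg _, (Int.fract_lt_one _).le⟩) (by positivity)

lemma fractal_natCast_add_one_div_sub (hb : 0 < b) (hα0 : 0 < α) (hα1 : α < 1)
    (hφ : φ 0 = φ 1) (hφB : ∀ x ∈ Set.Icc 0 1, |φ x| ≤ B) {f : ℝ → ℝ}
    (hf : ∀ t, f t = ∑' n : ℕ, α ^ n * φ (Int.fract ((b : ℝ) ^ n * t))) (n k : ℕ) :
    f (((k : ℝ) + 1) / (b : ℝ) ^ n) - f ((k : ℝ) / (b : ℝ) ^ n) =
      α ^ n * scaledIncrement b (levelIncrement α b φ) n k := by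
  have hbR : (b : ℝ) ≠ 0 := by exact_mod_cast hb.ne'
  have hvanish : ∀ m ∉ range n,
      α ^ m * φ (Int.fract ((b : ℝ) ^ m * (((k : ℝ) + 1) / (b : ℝ) ^ n))) -
        α ^ m * φ (Int.fract ((b : ℝ) ^ m * ((k : ℝ) / (b : ℝ) ^ n))) = 0 := by
    intro m hm
    have hpow : (b : ℝ) ^ m = (b : ℝ) ^ (m - n) * (b : ℝ) ^ n := by
      rw [← pow_add, Nat.sub_add_cancel (not_lt.1 (mem_range.not.1 hm))]
    have h1 : (b : ℝ) ^ m * (((k : ℝ) + 1) / (b : ℝ) ^ n) = (((k + 1) * b ^ (m - n) : ℕ) : ℝ) := by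
      rw [hpow]; push_cast; field_simp
    have h0 : (b : ℝ) ^ m * ((k : ℝ) / (b : ℝ) ^ n) = ((k * b ^ (m - n) : ℕ) : ℝ) := by
      rw [hpow]; push_cast; field_simp
    rw [h1, h0, Int.fract_natCast, Int.fract_natCast, sub_self]
  rw [hf, hf, ← (summable_fractalSeries hα0.le hα1 hφB _).tsum_sub
    (summable_fractalSeries hα0.le hα1 hφB _), tsum_eq_sum hvanish, scaledIncrement, mul_sum,
    ← sum_range_reflect]
  -- the summand of level `n - 1 - m` of `f` is the `m`-th summand of `G_n(k)`
  refine sum_congr rfl fun m hm => ?_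
  have hjn : n - 1 - m ≤ n := by omega
  have hnj : n - (n - 1 - m) = m + 1 := by have := mem_range.1 hm; omega
  have hscale : ∀ x : ℝ, (b : ℝ) ^ (n - 1 - m) * (x / (b : ℝ) ^ n) = x / (b : ℝ) ^ (m + 1) :=
    fun x => by rw [← hnj, pow_sub₀ _ hbR hjn]; field_simp
  have hα : α ^ (n - 1 - m) = α ^ n * (α ^ (m + 1))⁻¹ := by
    rw [← hnj, pow_sub₀ _ hα0.ne' hjn]; field_simp
  have hL : 0 < b ^ (m + 1) := pow_pos hb _
  rw [levelIncrement, hscale, hscale, hα, ← Nat.cast_pow,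
    comp_fract_natCast_add_div hφ hL k ⟨zero_le_one, le_rfl⟩,
    ← add_zero (k : ℝ), comp_fract_natCast_add_div hφ hL k ⟨le_rfl, zero_le_one⟩, add_zero]
  ring

lemma abs_levelIncrement_le {γ C : ℝ} (hα : 0 < α) (hb : 0 < b)
    (hHolder : ∀ x ∈ Set.Icc (0 : ℝ) 1, ∀ y ∈ Set.Icc (0 : ℝ) 1, |φ x - φ y| ≤ C * |x - y| ^ γ)
    {m r : ℕ} (hr : r < b ^ (m + 1)) :
    |levelIncrement α b φ m r| ≤ C * (α * (b : ℝ) ^ γ)⁻¹ * ((α * (b : ℝ) ^ γ)⁻¹) ^ m := by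
  have hbR : (0 : ℝ) < b := by exact_mod_cast hb
  have hbm : (0 : ℝ) < (b : ℝ) ^ (m + 1) := by positivity
  have hr1 : (r : ℝ) + 1 ≤ (b : ℝ) ^ (m + 1) := by exact_mod_cast hr
  have hstep := hHolder (((r : ℝ) + 1) / (b : ℝ) ^ (m + 1))
    ⟨by positivity, (div_le_one hbm).2 hr1⟩ ((r : ℝ) / (b : ℝ) ^ (m + 1))
    ⟨by positivity, (div_le_one hbm).2 (by linarith)⟩
  have hpow : |((r : ℝ) + 1) / (b : ℝ) ^ (m + 1) - (r : ℝ) / (b : ℝ) ^ (m + 1)| ^ γ =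
      (((b : ℝ) ^ γ) ^ (m + 1))⁻¹ := by
    rw [← sub_div, add_sub_cancel_left, one_div, abs_inv, abs_of_pos hbm, Real.inv_rpow hbm.le,
      ← Real.rpow_natCast, ← Real.rpow_mul hbR.le, mul_comm, Real.rpow_mul hbR.le,
      Real.rpow_natCast]
  rw [hpow] at hstep
  rw [levelIncrement, abs_mul, abs_inv, abs_pow, abs_of_pos hα]
  calc (α ^ (m + 1))⁻¹ * |_| ≤ (α ^ (m + 1))⁻¹ * (C * (((b : ℝ) ^ γ) ^ (m + 1))⁻¹) :=
        mul_le_mul_of_nonneg_left hstep (by positivity)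
    _ = _ := by ring

end Fractal

section ScaledIncrement

variable {b : ℕ} {d : ℕ → ℕ → ℝ} {c ρ : ℝ}

lemma scaledIncrement_mod_pow (b : ℕ) (d : ℕ → ℕ → ℝ) (N k : ℕ) :
    scaledIncrement b d N (k % b ^ N) = scaledIncrement b d N k :=
  sum_congr rfl fun m hm => by rw [Nat.mod_mod_of_dvd _ (pow_dvd_pow b (mem_range.1 hm))]

lemma scaledIncrement_sum_digits {u : ℕ → ℕ} (hu : ∀ i, u i < b) (N : ℕ) :
    scaledIncrement b d N (∑ i ∈ range N, u i * b ^ i) =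
      ∑ m ∈ range N, d m (∑ i ∈ range (m + 1), u i * b ^ i) :=
  sum_congr rfl fun m hm => by rw [sum_digits_mod_pow hu (mem_range.1 hm)]

lemma abs_scaledIncrement_sub_le (hb : 0 < b) (hρ0 : 0 ≤ ρ) (hρ1 : ρ < 1)
    (hd : ∀ m r, r < b ^ (m + 1) → |d m r| ≤ c * ρ ^ m) {N n : ℕ} (hNn : N ≤ n) (k : ℕ) :
    |scaledIncrement b d n k - scaledIncrement b d N k| ≤ 2 * c / (1 - ρ) * ρ ^ N := by
  rw [scaledIncrement, scaledIncrement, ← Real.norm_eq_abs, div_mul_eq_mul_div]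
  exact norm_sum_range_sub_sum_range_le_of_geometric_bound hρ0 hρ1
    (fun m => hd m _ (Nat.mod_lt _ (pow_pos hb _))) hNn

lemma abs_scaledIncrement_le (hb : 0 < b) (hρ0 : 0 ≤ ρ) (hρ1 : ρ < 1)
    (hd : ∀ m r, r < b ^ (m + 1) → |d m r| ≤ c * ρ ^ m) (n k : ℕ) :
    |scaledIncrement b d n k| ≤ 2 * c / (1 - ρ) := by
  simpa [scaledIncrement] using abs_scaledIncrement_sub_le hb hρ0 hρ1 hd (Nat.zero_le n) k

lemma abs_tsum_sub_scaledIncrement_sum_digits_le (hρ0 : 0 ≤ ρ) (hρ1 : ρ < 1)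
    (hd : ∀ m r, r < b ^ (m + 1) → |d m r| ≤ c * ρ ^ m) {u : ℕ → ℕ} (hu : ∀ i, u i < b)
    (N : ℕ) :
    |∑' m, d m (∑ i ∈ range (m + 1), u i * b ^ i) -
      scaledIncrement b d N (∑ i ∈ range N, u i * b ^ i)| ≤ 2 * c / (1 - ρ) * ρ ^ N := by
  have hbound : ∀ m, ‖d m (∑ i ∈ range (m + 1), u i * b ^ i)‖ ≤ c * ρ ^ m :=
    fun m => hd m _ (sum_digits_lt hu _)
  have hc : 0 ≤ c := by simpa using (norm_nonneg _).trans (hbound 0)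
  rw [scaledIncrement_sum_digits hu, abs_sub_comm]
  refine (norm_sum_range_sub_tsum_le_of_geometric_bound hρ1 hbound N).trans ?_
  have : 0 ≤ c * ρ ^ N / (1 - ρ) := div_nonneg (by positivity) (by linarith)
  rw [show 2 * c / (1 - ρ) * ρ ^ N = 2 * (c * ρ ^ N / (1 - ρ)) by ring]
  linarith

end ScaledIncrement

section Core

variable {Ω : Type*} [MeasurableSpace Ω] {P : Measure Ω} {b : ℕ} {U : ℕ → Ω → ℕ}
  {d : ℕ → ℕ → ℝ} {c ρ p : ℝ}

lemma abs_integral_rpow_sub_average_le [IsProbabilityMeasure P] (hb : 0 < b) (hρ0 : 0 ≤ ρ)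
    (hρ1 : ρ < 1) (hd : ∀ m r, r < b ^ (m + 1) → |d m r| ≤ c * ρ ^ m) (hp : 1 ≤ p)
    (hUmeas : ∀ i, Measurable (U i)) (hUlt : ∀ i ω, U i ω < b)
    (hUunif : ∀ i, ∀ j < b, P {ω | U i ω = j} = (b : ℝ≥0∞)⁻¹) (hUindep : iIndepFun U P)
    {Z : Ω → ℝ} (hZ : ∀ ω, Z ω = ∑' m, d m (∑ i ∈ range (m + 1), U i ω * b ^ i)) (N : ℕ) :
    |∫ ω, |Z ω| ^ p ∂P - (∑ r ∈ range (b ^ N), |scaledIncrement b d N r| ^ p) / b ^ N| ≤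
      p * (2 * c / (1 - ρ)) ^ (p - 1) * (2 * c / (1 - ρ) * ρ ^ N) := by
  set M := 2 * c / (1 - ρ)
  set R : ℕ → Ω → ℕ := fun N ω => ∑ i ∈ range N, U i ω * b ^ i
  have hGM : ∀ n k, |scaledIncrement b d n k| ≤ M := abs_scaledIncrement_le hb hρ0 hρ1 hd
  have hM : 0 ≤ M := (abs_nonneg _).trans (hGM 0 0)
  have happrox : ∀ N ω, |Z ω - scaledIncrement b d N (R N ω)| ≤ M * ρ ^ N := fun N ω => by
    rw [hZ]; exact abs_tsum_sub_scaledIncrement_sum_digits_le hρ0 hρ1 hd (hUlt · ω) N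
  have hZM : ∀ ω, |Z ω| ≤ M := fun ω => by simpa [scaledIncrement] using happrox 0 ω
  have hGRmeas : ∀ N, Measurable fun ω => scaledIncrement b d N (R N ω) := fun N =>
    (measurable_from_nat (f := scaledIncrement b d N)).comp (measurable_sum_digits hUmeas N)
  have hZmeas : Measurable Z := by
    refine measurable_of_tendsto_metrizable hGRmeas (tendsto_pi_nhds.2 fun ω => ?_)
    refine tendsto_iff_dist_tendsto_zero.2 (squeeze_zero (fun _ => dist_nonneg)
      (fun N => (dist_comm _ _).trans_le (happrox N ω)) ?_)
    simpa using (tendsto_pow_atTop_nhds_zero_of_lt_one hρ0 hρ1).const_mul M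
  have hint : ∀ {g : Ω → ℝ}, Measurable g → (∀ ω, |g ω| ≤ M) →
      Integrable (fun ω => |g ω| ^ p) P := fun hg hgM =>
    .of_bound (hg.abs.pow_const p).aestronglyMeasurable (M ^ p) (ae_of_all _ fun ω => by
      rw [Real.norm_of_nonneg (by positivity)]
      exact Real.rpow_le_rpow (abs_nonneg _) (hgM ω) (by linarith))
  rw [← integral_comp_sum_digits hb hUmeas hUlt hUunif hUindep N
      (fun r => |scaledIncrement b d N r| ^ p),
    ← integral_sub (hint hZmeas hZM) (hint (hGRmeas N) fun ω => hGM N _), ← Real.norm_eq_abs]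
  refine (norm_integral_le_of_norm_le_const (C := p * M ^ (p - 1) * (M * ρ ^ N))
    (ae_of_all _ fun ω => ?_)).trans_eq (by simp)
  rw [Real.norm_eq_abs]
  exact (abs_rpow_sub_abs_rpow_le hp (hZM ω) (hGM N _)).trans
    (mul_le_mul_of_nonneg_left (happrox N ω) (by positivity))

lemma abs_sum_rpow_scaledIncrement_sub_le (hb : 0 < b) (hρ0 : 0 ≤ ρ) (hρ1 : ρ < 1)
    (hd : ∀ m r, r < b ^ (m + 1) → |d m r| ≤ c * ρ ^ m) (hp : 1 ≤ p) {N n : ℕ} (hNn : N ≤ n)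
    (K : ℕ) :
    |∑ k ∈ range K, |scaledIncrement b d n k| ^ p - ∑ k ∈ range K, |scaledIncrement b d N k| ^ p| ≤
      K * (p * (2 * c / (1 - ρ)) ^ (p - 1) * (2 * c / (1 - ρ) * ρ ^ N)) := by
  have hGM := abs_scaledIncrement_le hb hρ0 hρ1 hd
  have hM : 0 ≤ 2 * c / (1 - ρ) := (abs_nonneg _).trans (hGM 0 0)
  rw [← sum_sub_distrib]
  refine (abs_sum_le_sum_abs _ _).trans ((sum_le_card_nsmul _ _ _ fun k _ => ?_).trans_eq
    (by rw [card_range, nsmul_eq_mul]))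
  exact (abs_rpow_sub_abs_rpow_le hp (hGM n k) (hGM N k)).trans
    (mul_le_mul_of_nonneg_left (abs_scaledIncrement_sub_le hb hρ0 hρ1 hd hNn k) (by positivity))

theorem tendsto_sum_abs_scaledIncrement_rpow_div [IsProbabilityMeasure P] (hb : 2 ≤ b)
    (hρ0 : 0 ≤ ρ) (hρ1 : ρ < 1) (hd : ∀ m r, r < b ^ (m + 1) → |d m r| ≤ c * ρ ^ m)
    (hp : 1 ≤ p) (hUmeas : ∀ i, Measurable (U i)) (hUlt : ∀ i ω, U i ω < b)
    (hUunif : ∀ i, ∀ j < b, P {ω | U i ω = j} = (b : ℝ≥0∞)⁻¹) (hUindep : iIndepFun U P)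
    {Z : Ω → ℝ} (hZ : ∀ ω, Z ω = ∑' m, d m (∑ i ∈ range (m + 1), U i ω * b ^ i))
    {t : ℝ} (ht : 0 ≤ t) :
    Tendsto (fun n : ℕ => (∑ k ∈ range (⌊t * (b : ℝ) ^ n⌋₊ + 1),
        |scaledIncrement b d n k| ^ p) / (b : ℝ) ^ n) atTop (𝓝 (t * ∫ ω, |Z ω| ^ p ∂P)) := by
  have hb0 : 0 < b := by omega
  set ε : ℕ → ℝ := fun N => p * (2 * c / (1 - ρ)) ^ (p - 1) * (2 * c / (1 - ρ) * ρ ^ N)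
  have hε : Tendsto ε atTop (𝓝 0) := by
    simpa using ((tendsto_pow_atTop_nhds_zero_of_lt_one hρ0 hρ1).const_mul
      (2 * c / (1 - ρ))).const_mul (p * (2 * c / (1 - ρ)) ^ (p - 1))
  have hs : Tendsto (fun n : ℕ => (b : ℝ) ^ n) atTop atTop :=
    tendsto_pow_atTop_atTop_of_one_lt (by exact_mod_cast hb)
  have hK := tendsto_nat_floor_mul_add_one_div hs ht
  refine tendsto_of_tendsto_approx (δ := fun N => (t + 1) * ε N)
    (by simpa using hε.const_mul (t + 1))
    (c := fun N => t * ((∑ r ∈ range (b ^ N), |scaledIncrement b d N r| ^ p) / b ^ N))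
    (u := fun N n => (∑ k ∈ range (⌊t * (b : ℝ) ^ n⌋₊ + 1),
      |scaledIncrement b d N k| ^ p) / (b : ℝ) ^ n) ?_ (fun N => ?_) (fun N => ?_)
  · refine tendsto_const_nhds.mul (tendsto_iff_norm_sub_tendsto_zero.2
      (squeeze_zero_norm (fun N => ?_) hε))
    rw [norm_norm, norm_sub_rev]
    exact abs_integral_rpow_sub_average_le hb0 hρ0 hρ1 hd hp hUmeas hUlt hUunif hUindep hZ N
  · have := tendsto_sum_range_mod_div (fun r => |scaledIncrement b d N r| ^ p)
      (pow_pos hb0 N) hs hK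
    simpa only [scaledIncrement_mod_pow, Nat.cast_pow] using this
  · filter_upwards [eventually_ge_atTop N, hK.eventually (eventually_le_nhds (lt_add_one t))]
      with n hNn hKn
    have hbn : (0 : ℝ) < (b : ℝ) ^ n := by positivity
    rw [div_le_iff₀ hbn] at hKn
    have hεN : 0 ≤ ε N := (abs_nonneg _).trans
      (abs_integral_rpow_sub_average_le hb0 hρ0 hρ1 hd hp hUmeas hUlt hUunif hUindep hZ N)
    rw [Real.dist_eq, ← sub_div, abs_div, abs_of_pos hbn, div_le_iff₀ hbn]
    calc _ ≤ ((⌊t * (b : ℝ) ^ n⌋₊ + 1 : ℕ) : ℝ) * ε N :=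
          abs_sum_rpow_scaledIncrement_sub_le hb0 hρ0 hρ1 hd hp hNn _
      _ ≤ (t + 1) * (b : ℝ) ^ n * ε N := mul_le_mul_of_nonneg_right hKn hεN
      _ = (t + 1) * ε N * (b : ℝ) ^ n := by ring

end Core

section Exponents

lemma rpow_eq_inv_of_eq_neg_log_div_log {α b p : ℝ} (hα0 : 0 < α) (hα1 : α < 1) (hb : 0 < b)
    (hp : p = -Real.log b / Real.log α) : α ^ p = b⁻¹ := by
  rw [Real.rpow_def_of_pos hα0, hp, mul_div_cancel₀ _ (Real.log_neg hα0 hα1).ne, Real.exp_neg,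
    Real.exp_log hb]

lemma one_le_neg_log_div_log {α b γ : ℝ} (hα0 : 0 < α) (hα1 : α < 1) (hb : 1 < b) (hγ : γ ≤ 1)
    (hαb : 1 < α * b ^ γ) : 1 ≤ -Real.log b / Real.log α := by
  have hlogα := Real.log_neg hα0 hα1
  have hlogb := Real.log_pos hb
  have hsum := Real.log_pos hαb
  rw [Real.log_mul hα0.ne' (by positivity), Real.log_rpow (by linarith)] at hsum
  rw [neg_div, ← div_neg, one_le_div (by linarith)]
  nlinarith

lemma abs_pow_mul_rpow {α b p : ℝ} (hα : 0 ≤ α) (hαp : α ^ p = b⁻¹) (n : ℕ) (x : ℝ) :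
    |α ^ n * x| ^ p = |x| ^ p / b ^ n := by
  rw [abs_mul, abs_pow, abs_of_nonneg hα, Real.mul_rpow (by positivity) (abs_nonneg x),
    ← Real.rpow_pow_comm hα, hαp, inv_pow, inv_mul_eq_div]

end Exponents

/-- Proposition A.2 (main part): the `p`-th variation of `f` along the `b`-adic
partitions exists and equals `t · E[|Z|^p]`. -/
theorem pth_variation_eq_expectation {Ω : Type*} [MeasurableSpace Ω]
    (P : Measure Ω) [IsProbabilityMeasure P]
    (b : ℕ) (hb : 2 ≤ b) (α γ : ℝ) (hα : α ∈ Set.Ioo (0 : ℝ) 1)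
    (hγ0 : 0 < γ) (hγ1 : γ ≤ 1) (hαb : 1 < α * (b : ℝ) ^ γ)
    (φ : ℝ → ℝ) (hφ : φ 0 = φ 1) (C : ℝ) (hC : 0 < C)
    (hHolder : ∀ x ∈ Set.Icc (0 : ℝ) 1, ∀ y ∈ Set.Icc (0 : ℝ) 1,
      |φ x - φ y| ≤ C * |x - y| ^ γ)
    (f : ℝ → ℝ)
    (hf : ∀ t, f t = ∑' n : ℕ, α ^ n * φ (Int.fract ((b : ℝ) ^ n * t)))
    (p : ℝ) (hp : p = -Real.log b / Real.log α)
    (U : ℕ → Ω → ℕ) (hUmeas : ∀ i, Measurable (U i)) (hUlt : ∀ i ω, U i ω < b)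
    (hUunif : ∀ i, ∀ j < b, P {ω | U i ω = j} = (b : ℝ≥0∞)⁻¹)
    (hUindep : iIndepFun U P)
    (R : ℕ → Ω → ℕ) (hR : ∀ m ω, R m ω = ∑ i ∈ Finset.range m, U i ω * b ^ i)
    (Z : Ω → ℝ)
    (hZ : ∀ ω, Z ω = ∑' m : ℕ, (α ^ (m + 1))⁻¹ *
        (φ (((R (m + 1) ω : ℝ) + 1) / (b : ℝ) ^ (m + 1)) -
          φ ((R (m + 1) ω : ℝ) / (b : ℝ) ^ (m + 1)))) :
    ∀ t ∈ Set.Icc (0 : ℝ) 1,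
      Tendsto (fun n : ℕ => ∑ k ∈ Finset.range (⌊t * (b : ℝ) ^ n⌋₊ + 1),
          |f (((k : ℝ) + 1) / (b : ℝ) ^ n) - f ((k : ℝ) / (b : ℝ) ^ n)| ^ p)
        atTop (nhds (t * ∫ ω, |Z ω| ^ p ∂P)) := by
  intro t ht
  obtain ⟨hα0, hα1⟩ := hα
  have hb1 : (1 : ℝ) < b := by exact_mod_cast hb
  have hφB : ∀ x ∈ Set.Icc (0 : ℝ) 1, |φ x| ≤ |φ 0| + C := fun x hx => by
    have hxγ : |x - 0| ^ γ ≤ 1 :=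
      Real.rpow_le_one (abs_nonneg _) (by rw [sub_zero, abs_of_nonneg hx.1]; exact hx.2) hγ0.le
    linarith [abs_sub_abs_le_abs_sub (φ x) (φ 0), hHolder x hx 0 ⟨le_rfl, zero_le_one⟩,
      mul_le_of_le_one_right hC.le hxγ]
  have hZ' : ∀ ω, Z ω = ∑' m, levelIncrement α b φ m (∑ i ∈ range (m + 1), U i ω * b ^ i) :=
    fun ω => by simp only [hZ, hR, levelIncrement]
  have key := tendsto_sum_abs_scaledIncrement_rpow_div hb (by positivity)
    (inv_lt_one_of_one_lt₀ hαb) (fun m r hr => abs_levelIncrement_le hα0 (by omega) hHolder hr)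
    (hp ▸ one_le_neg_log_div_log hα0 hα1 hb1 hγ1 hαb) hUmeas hUlt hUunif hUindep hZ' ht.1
  refine key.congr fun n => ?_
  rw [sum_div]
  refine sum_congr rfl fun k _ => ?_
  rw [fractal_natCast_add_one_div_sub (by omega) hα0 hα1 hφ hφB hf,
    abs_pow_mul_rpow hα0.le (rpow_eq_inv_of_eq_neg_log_div_log hα0 hα1 (by positivity) hp)]
end

section
/- Let b ∈ {2,3,…}, γ ∈ (0,1], and let φ : [0,1] → ℝ be Hölder continuous with exponent γ and satisfy φ(0) = φ(1). Let α ∈ (b^{−γ}, 1) and 0 < β < b^{−γ}, and define ψ(t) := ∑_{m=0}^∞ β^m φ(⟨b^m t⟩). Let U₁, U₂, … be independent uniform random variables on {0,…,b−1} and R_m := ∑_{i=1}^m U_i b^{i−1}. If the random variable Z_φ := ∑_{m=1}^∞ α^{−m}(φ((R_m+1)b^{−m}) − φ(R_m b^{−m})) is not almost surely equal to 0, then the random variable Z_ψ := ∑_{m=1}^∞ α^{−m}(ψ((R_m+1)b^{−m}) − ψ(R_m b^{−m})) is also not almost surely equal to 0; in fact Z_ψ = (1 − β/α)^{−1}·Z_φ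 almost surely. -/
open MeasureTheory ProbabilityTheory
open scoped ENNReal NNReal

/-!
For `t = R_n b⁻ⁿ` and `m < n`, the point `bᵐ t` is `R_{n-m} b^{-(n-m)}` modulo an integer, since
`R_n ≡ R_{n-m} (mod b^{n-m})`; for `m ≥ n` it is an integer. Because `φ(0) = φ(1)`, the carry at the
right endpoint `(R_{n-m} + 1) b^{-(n-m)} = 1` does not matter, so the increment of `ψ` over
`[R_n b⁻ⁿ, (R_n + 1) b⁻ⁿ]` is `∑_{k < n} β^{n-1-k}` times the increment of `φ` at level `k + 1`.
Hence the series of `Z_ψ` is the Cauchy product of the series of `Z_φ` with `∑ (β/α)^i`. Hölder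
continuity makes the level-`k` increments of `φ` `O(b^{-γk})`, and `b^{-γ} < α`, so that series
converges absolutely and the identity `Z_ψ = (1 - β/α)⁻¹ Z_φ` holds at every sample point.
-/

open Finset

noncomputable def badicIncrement (f : ℝ → ℝ) (b a n : ℕ) : ℝ :=
  f (((a : ℝ) + 1) / (b : ℝ) ^ n) - f ((a : ℝ) / (b : ℝ) ^ n)

theorem badicIncrement_const_mul (c : ℝ) (f : ℝ → ℝ) (b a n : ℕ) :
    badicIncrement (fun t => c * f t) b a n = c * badicIncrement f b a n :=
  (mul_sub c _ _).symm

theorem badicIncrement_tsum {f : ℕ → ℝ → ℝ} (hf : ∀ t, Summable fun m => f m t) (b a n : ℕ) :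
    badicIncrement (fun t => ∑' m, f m t) b a n = ∑' m, badicIncrement (f m) b a n :=
  ((hf _).tsum_sub (hf _)).symm

section Digits

variable {b : ℕ} (u : ℕ → ℕ)

theorem sum_range_mul_pow_lt_pow (hu : ∀ i, u i < b) (n : ℕ) :
    ∑ i ∈ range n, u i * b ^ i < b ^ n := by
  induction n with
  | zero => simp
  | succ n ih =>
    calc ∑ i ∈ range (n + 1), u i * b ^ i
        < b ^ n + u n * b ^ n := by rw [sum_range_succ]; omega
      _ = (u n + 1) * b ^ n := by ring
      _ ≤ b ^ (n + 1) := by rw [pow_succ']; exact Nat.mul_le_mul_right _ (hu n)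

theorem exists_sum_range_mul_pow_eq_add {j n : ℕ} (hjn : j ≤ n) :
    ∃ q, ∑ i ∈ range n, u i * b ^ i = ∑ i ∈ range j, u i * b ^ i + b ^ j * q := by
  obtain ⟨q, hq⟩ : b ^ j ∣ ∑ i ∈ Ico j n, u i * b ^ i :=
    dvd_sum fun i hi => (pow_dvd_pow b (mem_Ico.mp hi).1).mul_left _
  exact ⟨q, by rw [← sum_range_add_sum_Ico _ hjn, hq]⟩

end Digits

theorem natCast_div_pow_mem_Icc {b c n : ℕ} (h : c ≤ b ^ n) :
    (c : ℝ) / (b : ℝ) ^ n ∈ Set.Icc 0 1 :=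
  ⟨by positivity, div_le_one_of_le₀ (by exact_mod_cast h) (by positivity)⟩

theorem comp_fract_natCast_add {φ : ℝ → ℝ} (hφ : φ 0 = φ 1) (q : ℕ) {s : ℝ}
    (hs : s ∈ Set.Icc 0 1) : φ (Int.fract (q + s)) = φ s := by
  rw [Int.fract_natCast_add]
  rcases hs.2.lt_or_eq with hs1 | rfl
  · rw [Int.fract_eq_self.mpr ⟨hs.1, hs1⟩]
  · rw [Int.fract_one, hφ]

section Rescaling

variable {φ : ℝ → ℝ} {b : ℕ}

theorem badicIncrement_comp_fract_pow_mul_add (hφ : φ 0 = φ 1) (hb : 0 < b) {a j : ℕ}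
    (ha : a < b ^ j) (m q : ℕ) :
    badicIncrement (fun t => φ (Int.fract ((b : ℝ) ^ m * t))) b (a + b ^ j * q) (j + m) =
      badicIncrement φ b a j := by
  have hscale : ∀ c : ℝ, (b : ℝ) ^ m * ((c + ((b ^ j * q : ℕ) : ℝ)) / (b : ℝ) ^ (j + m)) =
      q + c / (b : ℝ) ^ j := by
    intro c
    push_cast
    field_simp
    ring
  have hleft := hscale a
  have hright := hscale (a + 1)
  simp only [badicIncrement]
  push_cast at hleft hright ⊢
  rw [add_right_comm, hleft, hright,
    comp_fract_natCast_add hφ q (natCast_div_pow_mem_Icc ha.le),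
    comp_fract_natCast_add hφ q (by exact_mod_cast natCast_div_pow_mem_Icc (c := a + 1) ha)]

theorem badicIncrement_comp_fract_pow_mul_of_le (hb : 0 < b) {a n m : ℕ} (hnm : n ≤ m) :
    badicIncrement (fun t => φ (Int.fract ((b : ℝ) ^ m * t))) b a n = 0 := by
  have hint : ∀ c : ℕ, (b : ℝ) ^ m * ((c : ℝ) / (b : ℝ) ^ n) = ((c * b ^ (m - n) : ℕ) : ℝ) := by
    intro c
    rw [← Nat.sub_add_cancel hnm, Nat.add_sub_cancel, pow_add]
    push_cast
    field_simp
  simp only [badicIncrement]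
  rw [show (a : ℝ) + 1 = ((a + 1 : ℕ) : ℝ) by push_cast; rfl, hint, hint, Int.fract_natCast,
    Int.fract_natCast, sub_self]

end Rescaling

theorem badicIncrement_fractal {φ ψ : ℝ → ℝ} (hφ : φ 0 = φ 1) {b : ℕ} (hb : 0 < b) {β : ℝ}
    (hsum : ∀ t, Summable fun m => β ^ m * φ (Int.fract ((b : ℝ) ^ m * t)))
    (hψ : ∀ t, ψ t = ∑' m, β ^ m * φ (Int.fract ((b : ℝ) ^ m * t)))
    {u : ℕ → ℕ} (hu : ∀ i, u i < b) {R : ℕ → ℕ} (hR : ∀ n, R n = ∑ i ∈ range n, u i * b ^ i)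
    (N : ℕ) :
    badicIncrement ψ b (R (N + 1)) (N + 1) =
      ∑ k ∈ range (N + 1), β ^ (N - k) * badicIncrement φ b (R (k + 1)) (k + 1) := by
  obtain rfl : ψ = _ := funext hψ
  rw [badicIncrement_tsum hsum]
  simp_rw [badicIncrement_const_mul]
  rw [tsum_eq_sum (s := range (N + 1)) fun m hm => by
    rw [badicIncrement_comp_fract_pow_mul_of_le hb (by simpa using hm), mul_zero]]
  rw [← sum_range_reflect]
  refine sum_congr rfl fun k hk => ?_
  have hkN : k ≤ N := Nat.lt_succ_iff.mp (mem_range.mp hk)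
  obtain ⟨q, hq⟩ := exists_sum_range_mul_pow_eq_add (b := b) u (Nat.succ_le_succ hkN)
  rw [show N + 1 - 1 - k = N - k by omega, hR (N + 1), hq, ← hR,
    show N + 1 = k + 1 + (N - k) by omega,
    badicIncrement_comp_fract_pow_mul_add hφ hb (hR _ ▸ sum_range_mul_pow_lt_pow u hu _)]

section Holder

variable {φ : ℝ → ℝ} {C γ : ℝ}

theorem abs_le_of_holder
    (hHolder : ∀ x ∈ Set.Icc (0 : ℝ) 1, ∀ y ∈ Set.Icc (0 : ℝ) 1, |φ x - φ y| ≤ C * |x - y| ^ γ)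
    (hγ : 0 ≤ γ) {x : ℝ} (hx : x ∈ Set.Icc (0 : ℝ) 1) :
    |φ x| ≤ |φ 0| + |C| := by
  have hx0 : |x - 0| ^ γ ≤ 1 :=
    Real.rpow_le_one (abs_nonneg _) (by rw [sub_zero, abs_of_nonneg hx.1]; exact hx.2) hγ
  have := hHolder x hx 0 ⟨le_rfl, zero_le_one⟩
  have := abs_sub_abs_le_abs_sub (φ x) (φ 0)
  nlinarith [le_abs_self C, neg_abs_le C, Real.rpow_nonneg (abs_nonneg (x - 0)) γ]

theorem abs_badicIncrement_le_of_holder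
    (hHolder : ∀ x ∈ Set.Icc (0 : ℝ) 1, ∀ y ∈ Set.Icc (0 : ℝ) 1, |φ x - φ y| ≤ C * |x - y| ^ γ)
    {b a n : ℕ} (hb : 0 < b) (ha : a < b ^ n) :
    |badicIncrement φ b a n| ≤ C * ((b : ℝ) ^ γ)⁻¹ ^ n := by
  have hlen : ((a : ℝ) + 1) / (b : ℝ) ^ n - (a : ℝ) / (b : ℝ) ^ n = ((b : ℝ) ^ n)⁻¹ := by
    field_simp
    ring
  have hpow : ((b : ℝ) ^ n)⁻¹ ^ γ = ((b : ℝ) ^ γ)⁻¹ ^ n := by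
    rw [Real.inv_rpow (by positivity), ← Real.rpow_natCast_mul (by positivity), mul_comm,
      Real.rpow_mul_natCast (by positivity), inv_pow]
  have := hHolder (((a : ℝ) + 1) / (b : ℝ) ^ n)
    (by exact_mod_cast natCast_div_pow_mem_Icc (c := a + 1) ha) _ (natCast_div_pow_mem_Icc ha.le)
  rwa [hlen, abs_inv, abs_pow, Nat.abs_cast, hpow] at this

end Holder

theorem tsum_sum_range_mul_geometric {K : Type*} [NormedDivisionRing K] [CompleteSpace K]
    {f : ℕ → K} (hf : Summable fun k => ‖f k‖) {c : K} (hc : ‖c‖ < 1) :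
    ∑' N, ∑ k ∈ range (N + 1), f k * c ^ (N - k) = (∑' k, f k) * (1 - c)⁻¹ := by
  rw [← tsum_geometric_of_norm_lt_one hc, tsum_mul_tsum_eq_tsum_sum_range_of_summable_norm hf]
  simpa only [norm_pow] using summable_geometric_of_lt_one (norm_nonneg c) hc

theorem tsum_badicIncrement_fractal {φ ψ : ℝ → ℝ} (hφ : φ 0 = φ 1) {C γ : ℝ} (hγ : 0 < γ)
    (hHolder : ∀ x ∈ Set.Icc (0 : ℝ) 1, ∀ y ∈ Set.Icc (0 : ℝ) 1, |φ x - φ y| ≤ C * |x - y| ^ γ)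
    {b : ℕ} (hb : 2 ≤ b) {α β : ℝ} (hα : ((b : ℝ) ^ γ)⁻¹ < α) (hβ0 : 0 < β)
    (hβ1 : β < ((b : ℝ) ^ γ)⁻¹)
    (hψ : ∀ t, ψ t = ∑' m, β ^ m * φ (Int.fract ((b : ℝ) ^ m * t)))
    {u : ℕ → ℕ} (hu : ∀ i, u i < b) {R : ℕ → ℕ} (hR : ∀ n, R n = ∑ i ∈ range n, u i * b ^ i) :
    ∑' N, (α ^ (N + 1))⁻¹ * badicIncrement ψ b (R (N + 1)) (N + 1) =
      (1 - β / α)⁻¹ * ∑' N, (α ^ (N + 1))⁻¹ * badicIncrement φ b (R (N + 1)) (N + 1) := by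
  set r := ((b : ℝ) ^ γ)⁻¹
  have hb0 : 0 < b := by omega
  have hr0 : 0 < r := by positivity
  have hr1 : r < 1 := inv_lt_one_of_one_lt₀ (Real.one_lt_rpow (by exact_mod_cast hb) hγ)
  have hα0 : 0 < α := hr0.trans hα
  have hsum : ∀ t, Summable fun m => β ^ m * φ (Int.fract ((b : ℝ) ^ m * t)) := fun t =>
    .of_norm_bounded ((summable_geometric_of_lt_one hβ0.le (hβ1.trans hr1)).mul_left (|φ 0| + |C|))
      fun m => by
        rw [norm_mul, norm_pow, Real.norm_of_nonneg hβ0.le, Real.norm_eq_abs, mul_comm]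
        exact mul_le_mul_of_nonneg_right (abs_le_of_holder hHolder hγ.le
          ⟨Int.fract_nonneg _, (Int.fract_lt_one _).le⟩) (by positivity)
  have hRlt : ∀ n, R n < b ^ n := fun n => hR n ▸ sum_range_mul_pow_lt_pow u hu n
  have hnorm : Summable fun k => ‖(α ^ (k + 1))⁻¹ * badicIncrement φ b (R (k + 1)) (k + 1)‖ := by
    refine .of_nonneg_of_le (fun _ => norm_nonneg _) (fun k => ?_)
      (((summable_geometric_of_lt_one (by positivity) ((div_lt_one hα0).2 hα)).mul_left
        (C * (r / α))))
    calc ‖(α ^ (k + 1))⁻¹ * badicIncrement φ b (R (k + 1)) (k + 1)‖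
        ≤ (α ^ (k + 1))⁻¹ * (C * r ^ (k + 1)) := by
          rw [norm_mul, norm_inv, norm_pow, Real.norm_of_nonneg hα0.le, Real.norm_eq_abs]
          exact mul_le_mul_of_nonneg_left
            (abs_badicIncrement_le_of_holder hHolder hb0 (hRlt _)) (by positivity)
      _ = C * (r / α) * (r / α) ^ k := by
          rw [div_pow, pow_succ r, pow_succ α]
          field_simp
  have hterm : ∀ N, (α ^ (N + 1))⁻¹ * badicIncrement ψ b (R (N + 1)) (N + 1) =
      ∑ k ∈ range (N + 1),
        (α ^ (k + 1))⁻¹ * badicIncrement φ b (R (k + 1)) (k + 1) * (β / α) ^ (N - k) := by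
    intro N
    rw [badicIncrement_fractal hφ hb0 hsum hψ hu hR, mul_sum]
    refine sum_congr rfl fun k hk => ?_
    rw [div_pow, show N + 1 = k + 1 + (N - k) by have := mem_range.mp hk; omega, pow_add]
    field_simp
  have hβα : ‖β / α‖ < 1 := by
    rw [Real.norm_of_nonneg (by positivity), div_lt_one hα0]
    exact hβ1.trans hα
  rw [tsum_congr hterm, tsum_sum_range_mul_geometric hnorm hβα, mul_comm]

theorem valid_base_of_fractal_general {Ω : Type*} [MeasurableSpace Ω]
    (P : Measure Ω)
    (b : ℕ) (hb : 2 ≤ b) (γ : ℝ) (hγ0 : 0 < γ)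
    (φ : ℝ → ℝ) (hφ : φ 0 = φ 1) (C : ℝ)
    (hHolder : ∀ x ∈ Set.Icc (0 : ℝ) 1, ∀ y ∈ Set.Icc (0 : ℝ) 1,
      |φ x - φ y| ≤ C * |x - y| ^ γ)
    (α β : ℝ) (hα1 : ((b : ℝ) ^ γ)⁻¹ < α)
    (hβ0 : 0 < β) (hβ1 : β < ((b : ℝ) ^ γ)⁻¹)
    (ψ : ℝ → ℝ)
    (hψ : ∀ t, ψ t = ∑' m : ℕ, β ^ m * φ (Int.fract ((b : ℝ) ^ m * t)))
    (U : ℕ → Ω → ℕ) (hUlt : ∀ i ω, U i ω < b)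
    (R : ℕ → Ω → ℕ) (hR : ∀ m ω, R m ω = ∑ i ∈ Finset.range m, U i ω * b ^ i)
    (Zφ Zψ : Ω → ℝ)
    (hZφ : ∀ ω, Zφ ω = ∑' m : ℕ, (α ^ (m + 1))⁻¹ *
        (φ (((R (m + 1) ω : ℝ) + 1) / (b : ℝ) ^ (m + 1)) -
          φ ((R (m + 1) ω : ℝ) / (b : ℝ) ^ (m + 1))))
    (hZψ : ∀ ω, Zψ ω = ∑' m : ℕ, (α ^ (m + 1))⁻¹ *
        (ψ (((R (m + 1) ω : ℝ) + 1) / (b : ℝ) ^ (m + 1)) -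
          ψ ((R (m + 1) ω : ℝ) / (b : ℝ) ^ (m + 1))))
    (hvalid : ¬ (∀ᵐ ω ∂P, Zφ ω = 0)) :
    (∀ᵐ ω ∂P, Zψ ω = (1 - β / α)⁻¹ * Zφ ω) ∧ ¬ (∀ᵐ ω ∂P, Zψ ω = 0) := by
  have hZ : ∀ ω, Zψ ω = (1 - β / α)⁻¹ * Zφ ω := fun ω => by
    rw [hZψ, hZφ]
    exact tsum_badicIncrement_fractal hφ hγ0 hHolder hb hα1 hβ0 hβ1 hψ (hUlt · ω) (hR · ω)
  have hβα : β / α < 1 := by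
    have hα0 : 0 < α := hβ0.trans (hβ1.trans hα1)
    rw [div_lt_one hα0]
    exact hβ1.trans hα1
  refine ⟨ae_of_all _ hZ, fun hψ0 => hvalid ?_⟩
  filter_upwards [hψ0] with ω hω
  rw [hZ, mul_eq_zero] at hω
  exact hω.resolve_left (inv_ne_zero (sub_pos.2 hβα).ne')

/-- Proposition A.5: if `φ` is a valid base function for `b` and `α`, then the fractal
function `ψ(t) = ∑ β^m φ(⟨b^m t⟩)` (with `0 < β < b^{−γ}`) is also a valid base
function; in fact `Z_ψ = (1 − β/α)⁻¹ Z_φ` almost surely. -/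
theorem valid_base_of_fractal {Ω : Type*} [MeasurableSpace Ω]
    (P : Measure Ω) [IsProbabilityMeasure P]
    (b : ℕ) (hb : 2 ≤ b) (γ : ℝ) (hγ0 : 0 < γ) (hγ1 : γ ≤ 1)
    (φ : ℝ → ℝ) (hφ : φ 0 = φ 1) (C : ℝ) (hC : 0 < C)
    (hHolder : ∀ x ∈ Set.Icc (0 : ℝ) 1, ∀ y ∈ Set.Icc (0 : ℝ) 1,
      |φ x - φ y| ≤ C * |x - y| ^ γ)
    (α β : ℝ) (hα1 : ((b : ℝ) ^ γ)⁻¹ < α) (hα2 : α < 1)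
    (hβ0 : 0 < β) (hβ1 : β < ((b : ℝ) ^ γ)⁻¹)
    (ψ : ℝ → ℝ)
    (hψ : ∀ t, ψ t = ∑' m : ℕ, β ^ m * φ (Int.fract ((b : ℝ) ^ m * t)))
    (U : ℕ → Ω → ℕ) (hUmeas : ∀ i, Measurable (U i)) (hUlt : ∀ i ω, U i ω < b)
    (hUunif : ∀ i, ∀ j < b, P {ω | U i ω = j} = (b : ℝ≥0∞)⁻¹)
    (hUindep : iIndepFun U P)
    (R : ℕ → Ω → ℕ) (hR : ∀ m ω, R m ω = ∑ i ∈ Finset.range m, U i ω * b ^ i)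
    (Zφ Zψ : Ω → ℝ)
    (hZφ : ∀ ω, Zφ ω = ∑' m : ℕ, (α ^ (m + 1))⁻¹ *
        (φ (((R (m + 1) ω : ℝ) + 1) / (b : ℝ) ^ (m + 1)) -
          φ ((R (m + 1) ω : ℝ) / (b : ℝ) ^ (m + 1))))
    (hZψ : ∀ ω, Zψ ω = ∑' m : ℕ, (α ^ (m + 1))⁻¹ *
        (ψ (((R (m + 1) ω : ℝ) + 1) / (b : ℝ) ^ (m + 1)) -
          ψ ((R (m + 1) ω : ℝ) / (b : ℝ) ^ (m + 1))))
    (hvalid : ¬ (∀ᵐ ω ∂P, Zφ ω = 0)) :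
    (∀ᵐ ω ∂P, Zψ ω = (1 - β / α)⁻¹ * Zφ ω) ∧ ¬ (∀ᵐ ω ∂P, Zψ ω = 0) :=
  valid_base_of_fractal_general P b hb γ hγ0 φ hφ C hHolder α β hα1 hβ0 hβ1 ψ hψ U hUlt R hR Zφ Zψ
    hZφ hZψ hvalid
end

section
/- Let b ∈ {2,3,…} and let m > k ≥ 1 be integers. For every integer j, the set {i ∈ {0,1,…,b^m − 1} : ((i·b^{m−k}) mod b^m) − i = j} contains at most one element. -/
/-! Write `M = b^m` and `c = b^(m-k)`. If `i₁, i₂` give the same value of `(i c mod M) - i`, then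
`M ∣ (i₁ - i₂)(c - 1)`. Since `b ∣ c`, the factor `c - 1` is coprime to `b`, hence to `M`, so
`M ∣ i₁ - i₂`, which forces `i₁ = i₂` because both lie in `[0, M)`. -/

theorem isCoprime_pow_pow_sub_one {R : Type*} [CommRing R] (b : R) (m : ℕ) {n : ℕ} (hn : n ≠ 0) :
    IsCoprime (b ^ m) (b ^ n - 1) := by
  have hb : IsCoprime b (b ^ n - 1) := ⟨b ^ (n - 1), -1, by rw [pow_sub_one_mul hn]; ring⟩
  exact hb.pow_left

namespace Int

theorem dvd_mul_sub_one_of_emod_mul_sub_eq {M c x y : ℤ} (h : x * c % M - x = y * c % M - y) :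
    M ∣ (x - y) * (c - 1) :=
  ⟨x * c / M - y * c / M, by
    linear_combination h - emod_add_mul_ediv (x * c) M + emod_add_mul_ediv (y * c) M⟩

theorem injOn_emod_mul_sub {M c : ℤ} (hc : IsCoprime M (c - 1)) :
    Set.InjOn (fun x => x * c % M - x) (Set.Ico 0 M) := by
  intro x ⟨hx₀, hxM⟩ y ⟨hy₀, hyM⟩ h
  have hdvd : M ∣ x - y := hc.dvd_of_dvd_mul_right (dvd_mul_sub_one_of_emod_mul_sub_eq h)
  have habs : |x - y| < M := abs_sub_lt_iff.mpr ⟨by omega, by omega⟩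
  exact sub_eq_zero.mp (eq_zero_of_abs_lt_dvd hdvd habs)

end Int

theorem badic_shift_injective_general (b m k : ℕ) (hkm : k < m)
    (j : ℤ) :
    Set.Subsingleton
      {i : ℕ | i < b ^ m ∧ ((i * b ^ (m - k) : ℤ) % (b ^ m : ℤ)) - (i : ℤ) = j} := by
  rintro i₁ ⟨hi₁, e₁⟩ i₂ ⟨hi₂, e₂⟩
  have hinj := Int.injOn_emod_mul_sub
    (isCoprime_pow_pow_sub_one (b : ℤ) m (Nat.sub_ne_zero_of_lt hkm))
  exact_mod_cast hinj ⟨by positivity, by exact_mod_cast hi₁⟩ ⟨by positivity, by exact_mod_cast hi₂⟩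
    (e₁.trans e₂.symm)

/-- Lemma 3.3 of the paper: for `m > k ≥ 1` and any integer `j`, there is at most one
`i ∈ {0,…,b^m − 1}` with `((i·b^{m−k}) mod b^m) − i = j`. -/
theorem badic_shift_injective (b m k : ℕ) (hb : 2 ≤ b) (hk : 1 ≤ k) (hkm : k < m)
    (j : ℤ) :
    Set.Subsingleton
      {i : ℕ | i < b ^ m ∧ ((i * b ^ (m - k) : ℤ) % (b ^ m : ℤ)) - (i : ℤ) = j} :=
  badic_shift_injective_general b m k hkm j
end

section
/- Fix an integer b ≥ 2. For h : [0,1] → ℝ and n ∈ ℕ, let V_n(h) := ∑_{k=0}^{bⁿ−1} (h((k+1)·b^{−n}) − h(k·b^{−n}))². Let f, g : [0,1] → ℝ be continuous functions such that limsup_{n→∞} V_n(f) < ∞ and n^{−1}·V_n(g) → c for some c ≥ 0. Then n^{−1}·V_n(f + g) → c as n → ∞. -/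
/-!
`V_n(h)` is the squared Euclidean norm of the vector of increments of `h` over the `n`-th
`b`-adic partition, and this vector is additive in `h`. The triangle inequality then gives
`|√V_n(f+g) - √V_n(g)| ≤ √V_n(f)`, which is bounded, so after dividing by `√n` both square roots
tend to `√c`.
-/

open Filter Topology

section
variable {α : Type*} {l : Filter α}

theorem tendsto_sq_of_abs_sub_le {x y z : α → ℝ} {c : ℝ} (hc : 0 ≤ c) (hy0 : ∀ a, 0 ≤ y a)
    (hx : Tendsto x l (𝓝 0)) (hzy : ∀ a, |z a - y a| ≤ x a)
    (hy : Tendsto (fun a => y a ^ 2) l (𝓝 c)) :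
    Tendsto (fun a => z a ^ 2) l (𝓝 c) := by
  have hy' : Tendsto y l (𝓝 √c) := by simpa [Real.sqrt_sq (hy0 _)] using hy.sqrt
  have hz : Tendsto z l (𝓝 √c) := by
    simpa using (squeeze_zero_norm hzy hx).add hy'
  simpa [Real.sq_sqrt hc] using hz.pow 2

theorem tendsto_sq_div_of_abs_sub_le {p q s r : α → ℝ} {c M : ℝ} (hr : Tendsto r l atTop)
    (hq0 : ∀ a, 0 ≤ q a) (hsq : ∀ a, |s a - q a| ≤ p a)
    (hp : ∀ᶠ a in l, p a ^ 2 ≤ M) (hc : 0 ≤ c) (hq : Tendsto (fun a => q a ^ 2 / r a) l (𝓝 c)) :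
    Tendsto (fun a => s a ^ 2 / r a) l (𝓝 c) := by
  have hp0 : ∀ a, 0 ≤ p a := fun a => (abs_nonneg _).trans (hsq a)
  have hscale : ∀ᶠ a in l, ∀ t : ℝ, (t / √(r a)) ^ 2 = t ^ 2 / r a := by
    filter_upwards [hr.eventually_ge_atTop 0] with a ha t
    rw [div_pow, Real.sq_sqrt ha]
  have hp' : Tendsto (fun a => p a / √(r a)) l (𝓝 0) := by
    refine squeeze_zero' (.of_forall fun a => div_nonneg (hp0 a) (Real.sqrt_nonneg _)) ?_
      (tendsto_const_nhds.div_atTop (Real.tendsto_sqrt_atTop.comp hr) (a := √M))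
    filter_upwards [hp] with a ha
    exact div_le_div_of_nonneg_right
      ((Real.sqrt_sq (hp0 a)).symm.trans_le (Real.sqrt_le_sqrt ha)) (Real.sqrt_nonneg _)
  refine (tendsto_sq_of_abs_sub_le (y := fun a => q a / √(r a)) (z := fun a => s a / √(r a)) hc
    (fun a => div_nonneg (hq0 a) (Real.sqrt_nonneg _)) hp' (fun a => ?_) (hq.congr' ?_)).congr' ?_
  · rw [← sub_div, abs_div, abs_of_nonneg (Real.sqrt_nonneg _)]
    exact div_le_div_of_nonneg_right (hsq a) (Real.sqrt_nonneg _)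
  · filter_upwards [hscale] with a ha using (ha _).symm
  · filter_upwards [hscale] with a ha using ha _

end

noncomputable def badicIncrements (b n : ℕ) (h : ℝ → ℝ) : EuclideanSpace ℝ (Fin (b ^ n)) :=
  WithLp.toLp 2 fun k => h (((k : ℝ) + 1) / (b : ℝ) ^ n) - h ((k : ℝ) / (b : ℝ) ^ n)

theorem badicIncrements_add (b n : ℕ) (f g : ℝ → ℝ) :
    badicIncrements b n (fun t => f t + g t) = badicIncrements b n f + badicIncrements b n g := by
  simp only [badicIncrements, ← WithLp.toLp_add]
  congr 1
  ext k
  simp only [Pi.add_apply]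
  ring

theorem norm_badicIncrements_sq (b n : ℕ) (h : ℝ → ℝ) :
    ‖badicIncrements b n h‖ ^ 2 = ∑ k ∈ Finset.range (b ^ n),
      (h (((k : ℝ) + 1) / (b : ℝ) ^ n) - h ((k : ℝ) / (b : ℝ) ^ n)) ^ 2 := by
  simp [EuclideanSpace.norm_sq_eq, badicIncrements, Finset.sum_range]

theorem rescaled_quadratic_variation_add_general (b : ℕ)
    (f g : ℝ → ℝ)
    (V : (ℝ → ℝ) → ℕ → ℝ)
    (hV : ∀ h n, V h n = ∑ k ∈ Finset.range (b ^ n),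
        (h (((k : ℝ) + 1) / (b : ℝ) ^ n) - h ((k : ℝ) / (b : ℝ) ^ n)) ^ 2)
    (c : ℝ) (hc : 0 ≤ c)
    (hfbdd : ∃ M : ℝ, ∀ᶠ n in atTop, V f n ≤ M)
    (hglim : Tendsto (fun n : ℕ => V g n / (n : ℝ)) atTop (nhds c)) :
    Tendsto (fun n : ℕ => V (fun t => f t + g t) n / (n : ℝ)) atTop (nhds c) := by
  have hV_eq_norm : ∀ h n, V h n = ‖badicIncrements b n h‖ ^ 2 := fun h n => by
    rw [hV, norm_badicIncrements_sq]
  obtain ⟨M, hM⟩ := hfbdd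
  simp only [hV_eq_norm] at hM hglim ⊢
  refine tendsto_sq_div_of_abs_sub_le tendsto_natCast_atTop_atTop (fun _ => norm_nonneg _)
    (fun n => ?_) hM hc hglim
  simpa [badicIncrements_add] using
    abs_norm_sub_norm_le (badicIncrements b n f + badicIncrements b n g) (badicIncrements b n g)

/-- Lemma 3.11 of the paper: if the `b`-adic quadratic variation sums of `f` stay
bounded and `n⁻¹ V_n(g) → c`, then `n⁻¹ V_n(f+g) → c`. -/
theorem rescaled_quadratic_variation_add (b : ℕ) (hb : 2 ≤ b)
    (f g : ℝ → ℝ)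
    (hf : ContinuousOn f (Set.Icc (0 : ℝ) 1))
    (hg : ContinuousOn g (Set.Icc (0 : ℝ) 1))
    (V : (ℝ → ℝ) → ℕ → ℝ)
    (hV : ∀ h n, V h n = ∑ k ∈ Finset.range (b ^ n),
        (h (((k : ℝ) + 1) / (b : ℝ) ^ n) - h ((k : ℝ) / (b : ℝ) ^ n)) ^ 2)
    (c : ℝ) (hc : 0 ≤ c)
    (hfbdd : ∃ M : ℝ, ∀ᶠ n in atTop, V f n ≤ M)
    (hglim : Tendsto (fun n : ℕ => V g n / (n : ℝ)) atTop (nhds c)) :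
    Tendsto (fun n : ℕ => V (fun t => f t + g t) n / (n : ℝ)) atTop (nhds c) :=
  rescaled_quadratic_variation_add_general b f g V hV c hc hfbdd hglim
end

section
/- Fix an integer b ≥ 2 and H ∈ (0, 1/2]. For n ∈ ℕ let t_i := i·b^{−n}, and let R_H(u,v;s,t) := (1/2)·(|v−s|^{2H} + |u−t|^{2H} − |v−t|^{2H} − |u−s|^{2H}). Then there exists a constant L > 0, depending only on H and b, such that for all n ∈ ℕ and all i ∈ {1,…,bⁿ}: ∑_{j ∈ {1,…,bⁿ}, |i−j| > 2} |R_H(t_{i−1}, t_i; t_{j−1}, t_j)| ≤ L·b^{−2nH}. -/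
/-!
On the grid `t_i = i / c` with `c = bⁿ`, the covariance of the `i`-th and `j`-th increments
equals `-(2 m^q - (m+1)^q - (m-1)^q) / (2 c^q)`, where `m = |i - j|` and `q = 2H`. For
`q ≤ 1` the bracket is nonnegative by concavity of `x ↦ x^q`, and it is the difference of
consecutive increments `φ m - φ (m+1)` with `φ m = m^q - (m-1)^q`. Summing over the `j`
on either side of `i` therefore telescopes to at most `φ 3 = 3^q - 2^q ≤ 1`, which gives the
bound with `L = 1`.
-/

open Real Finset

namespace Finset

variable {ι κ M : Type*} [AddCommMonoid M] [Preorder M] [AddLeftMono M]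

theorem sum_comp_le_sum_of_injOn {s : Finset ι} {t : Finset κ} {g : ι → κ} {f : κ → M}
    (hg : Set.InjOn g s) (hst : ∀ x ∈ s, g x ∈ t) (hf : ∀ y ∈ t, 0 ≤ f y) :
    ∑ x ∈ s, f (g x) ≤ ∑ y ∈ t, f y := by
  classical
  rw [← sum_image hg]
  exact sum_le_sum_of_subset_of_nonneg (image_subset_iff.2 hst) fun y hy _ ↦ hf y hy

/-- Each distance `m ≥ 3` is attained by at most two indices `j`, one on each side of `i`. -/
theorem sum_filter_two_lt_dist_le (F : ℕ → M) (hF : ∀ m, 3 ≤ m → 0 ≤ F m) {i N : ℕ}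
    (hi : i ≤ N) :
    ∑ j ∈ (Icc 1 N).filter (fun j : ℕ ↦ 2 < |(i : ℤ) - j|), F ((i : ℤ) - j).natAbs
      ≤ 2 • ∑ m ∈ Icc 3 N, F m := by
  set S := (Icc 1 N).filter (fun j : ℕ ↦ 2 < |(i : ℤ) - j|)
  have hS : ∀ j ∈ S, 1 ≤ j ∧ j ≤ N ∧ 2 < ((i : ℤ) - j).natAbs := fun j hj ↦ by
    simp only [S, mem_filter, mem_Icc, Int.abs_eq_natAbs] at hj
    omega
  have hF' : ∀ m ∈ Icc 3 N, 0 ≤ F m := fun m hm ↦ hF m (mem_Icc.1 hm).1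
  have hside : ∀ (p : ℕ → Prop) [DecidablePred p], (∀ j k, p j → p k → (j < i ↔ k < i)) →
      ∑ j ∈ S.filter p, F ((i : ℤ) - j).natAbs ≤ ∑ m ∈ Icc 3 N, F m := by
    intro p _ hp
    refine sum_comp_le_sum_of_injOn (fun j hj k hk hjk ↦ ?_) (fun j hj ↦ ?_) hF'
    · simp only [coe_filter, Set.mem_ofPred_eq] at hj hk
      have := hS j hj.1; have := hS k hk.1; have := hp j k hj.2 hk.2
      replace hjk : ((i : ℤ) - j).natAbs = ((i : ℤ) - k).natAbs := hjk
      omega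
    · have := hS j (mem_filter.1 hj).1
      rw [mem_Icc]; omega
  rw [← sum_filter_add_sum_filter_not S (· < i), two_nsmul]
  exact add_le_add (hside _ fun _ _ ↦ iff_of_true) (hside _ fun _ _ ↦ iff_of_false)

theorem sum_Icc_sub_succ_le {G : Type*} [AddCommGroup G] [PartialOrder G] [IsOrderedAddMonoid G]
    {φ : ℕ → G} {a : ℕ} (hφ : ∀ m, a ≤ m → 0 ≤ φ m) (N : ℕ) :
    ∑ m ∈ Icc a N, (φ m - φ (m + 1)) ≤ φ a := by
  rcases le_or_gt a N with haN | hNa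
  · calc ∑ m ∈ Icc a N, (φ m - φ (m + 1)) = -∑ m ∈ Icc a N, (φ (m + 1) - φ m) := by
          simp only [← sum_neg_distrib, neg_sub]
      _ = φ a - φ (N + 1) := by rw [sum_Icc_sub haN, neg_sub]
      _ ≤ φ a := sub_le_self _ (hφ _ (by omega))
  · simpa [Icc_eq_empty_of_lt hNa] using hφ a le_rfl

end Finset

noncomputable def rpowConcavityGap (q x : ℝ) : ℝ :=
  2 * x ^ q - (x + 1) ^ q - (x - 1) ^ q

theorem rpowConcavityGap_nonneg {q x : ℝ} (hq0 : 0 ≤ q) (hq1 : q ≤ 1) (hx : 1 ≤ x) :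
    0 ≤ rpowConcavityGap q x := by
  have h := (concaveOn_rpow hq0 hq1).2 (Set.mem_Ici.2 (by linarith : (0 : ℝ) ≤ x + 1))
    (Set.mem_Ici.2 (by linarith : (0 : ℝ) ≤ x - 1)) (by norm_num : (0 : ℝ) ≤ 1 / 2)
    (by norm_num : (0 : ℝ) ≤ 1 / 2) (by norm_num)
  have hmid : (1 / 2 : ℝ) • (x + 1) + (1 / 2 : ℝ) • (x - 1) = x := by
    simp only [smul_eq_mul]; ring
  rw [hmid] at h
  simp only [smul_eq_mul] at h
  unfold rpowConcavityGap
  linarith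

theorem sum_Icc_rpowConcavityGap_le_one {q : ℝ} (hq0 : 0 ≤ q) (hq1 : q ≤ 1) (N : ℕ) :
    ∑ m ∈ Finset.Icc 3 N, rpowConcavityGap q m ≤ 1 := by
  set φ : ℕ → ℝ := fun m ↦ (m : ℝ) ^ q - ((m : ℝ) - 1) ^ q
  have hφ : ∀ m, 3 ≤ m → 0 ≤ φ m := fun m hm ↦ by
    have : (3 : ℝ) ≤ m := by exact_mod_cast hm
    exact sub_nonneg.2 (rpow_le_rpow (by linarith) (by linarith) hq0)
  have hgap : ∀ m : ℕ, rpowConcavityGap q m = φ m - φ (m + 1) := fun m ↦ by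
    simp only [rpowConcavityGap, φ, Nat.cast_succ, add_sub_cancel_right]; ring
  have hφ3 : φ 3 ≤ 1 := by
    have := rpow_add_le_add_rpow (by norm_num : (0 : ℝ) ≤ 2) zero_le_one hq0 hq1
    simp only [φ, one_rpow] at this ⊢
    norm_num at this ⊢
    linarith
  simp only [hgap]
  exact (sum_Icc_sub_succ_le hφ N).trans hφ3

theorem abs_add_one_rpow_add_abs_sub_one_rpow {x : ℝ} (q : ℝ) (hx : 1 ≤ |x|) :
    |x + 1| ^ q + |x - 1| ^ q = (|x| + 1) ^ q + (|x| - 1) ^ q := by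
  rcases abs_cases x with ⟨hax, -⟩ | ⟨hax, -⟩ <;> rw [hax] at hx ⊢
  · rw [abs_of_nonneg (by linarith), abs_of_nonneg (by linarith)]
  · rw [abs_of_nonpos (by linarith), abs_of_nonpos (by linarith), add_comm]
    ring_nf

theorem fbm_increment_cov_eq {q c : ℝ} (hc : 0 < c) {x y : ℝ} (hxy : 1 ≤ |x - y|) :
    1 / 2 * (|x / c - (y - 1) / c| ^ q + |(x - 1) / c - y / c| ^ q
      - |x / c - y / c| ^ q - |(x - 1) / c - (y - 1) / c| ^ q)
      = -(rpowConcavityGap q |x - y| / (2 * c ^ q)) := by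
  have hscale : ∀ z : ℝ, |z / c| ^ q = |z| ^ q / c ^ q := fun z ↦ by
    rw [abs_div, abs_of_pos hc, div_rpow (abs_nonneg _) hc.le]
  have hcq : c ^ q ≠ 0 := (rpow_pos_of_pos hc q).ne'
  have h := abs_add_one_rpow_add_abs_sub_one_rpow q hxy
  rw [show x / c - (y - 1) / c = (x - y + 1) / c by ring,
    show (x - 1) / c - y / c = (x - y - 1) / c by ring,
    show x / c - y / c = (x - y) / c by ring,
    show (x - 1) / c - (y - 1) / c = (x - y) / c by ring,
    hscale, hscale, hscale, rpowConcavityGap]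
  field_simp
  linarith

theorem abs_fbm_increment_cov_natCast_eq {q c : ℝ} (hq0 : 0 ≤ q) (hq1 : q ≤ 1) (hc : 0 < c)
    {i j : ℕ} (hij : i ≠ j) :
    |1 / 2 * (|(i : ℝ) / c - ((j : ℝ) - 1) / c| ^ q + |((i : ℝ) - 1) / c - (j : ℝ) / c| ^ q
      - |(i : ℝ) / c - (j : ℝ) / c| ^ q - |((i : ℝ) - 1) / c - ((j : ℝ) - 1) / c| ^ q)|
      = rpowConcavityGap q ((i : ℤ) - j).natAbs / (2 * c ^ q) := by
  have hdist : |(i : ℝ) - j| = ((i : ℤ) - j).natAbs := by push_cast [Nat.cast_natAbs]; rfl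
  have hnear : (1 : ℝ) ≤ ((i : ℤ) - j).natAbs := by
    exact_mod_cast (by omega : 1 ≤ ((i : ℤ) - j).natAbs)
  rw [fbm_increment_cov_eq hc (hdist ▸ hnear), abs_neg, hdist, abs_of_nonneg]
  exact div_nonneg (rpowConcavityGap_nonneg hq0 hq1 hnear) (by positivity)

/-- Lemma 3.8 of the paper: for `H ∈ (0, 1/2]` there is a constant `L` such that for
all `n` and all `i ∈ {1,…,bⁿ}`, the total covariance of the `i`-th `b`-adic increment
of fBm with all increments at distance more than `2` is at most `L b^{−2nH}`. -/
theorem fbm_offdiagonal_covariance_sum_bound (b : ℕ) (hb : 2 ≤ b)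
    (H : ℝ) (hH0 : 0 < H) (hH : H ≤ 1 / 2)
    (RH : ℝ → ℝ → ℝ → ℝ → ℝ)
    (hRH : ∀ u v s t : ℝ, RH u v s t =
      (1 / 2) * (|v - s| ^ (2 * H) + |u - t| ^ (2 * H)
        - |v - t| ^ (2 * H) - |u - s| ^ (2 * H))) :
    ∃ L > 0, ∀ n : ℕ, ∀ i ∈ Finset.Icc 1 (b ^ n),
      ∑ j ∈ (Finset.Icc 1 (b ^ n)).filter (fun j : ℕ => 2 < |(i : ℤ) - (j : ℤ)|),
          |RH (((i : ℝ) - 1) / (b : ℝ) ^ n) ((i : ℝ) / (b : ℝ) ^ n)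
            (((j : ℝ) - 1) / (b : ℝ) ^ n) ((j : ℝ) / (b : ℝ) ^ n)|
        ≤ L * (b : ℝ) ^ (-2 * (n : ℝ) * H) := by
  have hq0 : 0 ≤ 2 * H := by positivity
  have hq1 : 2 * H ≤ 1 := by linarith
  have hb0 : (0 : ℝ) < b := by exact_mod_cast (by omega : 0 < b)
  refine ⟨1, one_pos, fun n i hi ↦ ?_⟩
  have hscale : (b : ℝ) ^ (-2 * (n : ℝ) * H) = 1 / ((b : ℝ) ^ n) ^ (2 * H) := by
    rw [one_div, ← rpow_neg (by positivity), ← rpow_natCast, ← rpow_mul hb0.le]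
    ring_nf
  set c : ℝ := (b : ℝ) ^ n
  have hc : 0 < c := by positivity
  set S := (Finset.Icc 1 (b ^ n)).filter (fun j : ℕ => 2 < |(i : ℤ) - (j : ℤ)|)
  have hterm : ∀ j ∈ S, |RH (((i : ℝ) - 1) / c) ((i : ℝ) / c) (((j : ℝ) - 1) / c) ((j : ℝ) / c)|
      = rpowConcavityGap (2 * H) ((i : ℤ) - j).natAbs / (2 * c ^ (2 * H)) := fun j hj ↦ by
    have hij : i ≠ j := by rintro rfl; simp [S] at hj
    rw [hRH, abs_fbm_increment_cov_natCast_eq hq0 hq1 hc hij]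
  have hgap : ∀ m : ℕ, 3 ≤ m → 0 ≤ rpowConcavityGap (2 * H) m := fun m hm ↦
    rpowConcavityGap_nonneg hq0 hq1 (by exact_mod_cast (by omega : 1 ≤ m))
  calc _ = (∑ j ∈ S, rpowConcavityGap (2 * H) ((i : ℤ) - j).natAbs) / (2 * c ^ (2 * H)) := by
        rw [Finset.sum_congr rfl hterm, Finset.sum_div]
    _ ≤ (2 • ∑ m ∈ Finset.Icc 3 (b ^ n), rpowConcavityGap (2 * H) m) / (2 * c ^ (2 * H)) := by
        gcongr
        exact Finset.sum_filter_two_lt_dist_le _ hgap (Finset.mem_Icc.1 hi).2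
    _ ≤ (2 * 1) / (2 * c ^ (2 * H)) := by
        rw [nsmul_eq_mul, Nat.cast_ofNat]
        gcongr
        exact sum_Icc_rpowConcavityGap_le_one hq0 hq1 _
    _ = 1 * (b : ℝ) ^ (-2 * (n : ℝ) * H) := by
        rw [hscale]; ring
end

section
/- Fix an integer b ≥ 2 and H ∈ (0,1), and let R_H(u,v;s,t) := (1/2)·(|v−s|^{2H} + |u−t|^{2H} − |v−t|^{2H} − |u−s|^{2H}). Let n ∈ ℕ and let 0 ≤ u ≤ v ≤ 1 be such that u·bⁿ and v·bⁿ are integers. Then for every family of real numbers (μ_j)_{1 ≤ j ≤ b^{n+1}}: ∑_{j=1}^{b^{n+1}} |μ_j| · |R_H((j−1)·b^{−(n+1)}, j·b^{−(n+1)}; u, v)| ≤ ∑_{i=1}^{bⁿ} ( max_{(i−1)b < j ≤ ib} |μ_j| ) · |R_H((i−1)·b^{−n}, i·b^{−n}; u, v)|. -/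
/-!
Write `R_H(s,t;u,v) = Φ(t) - Φ(s)` with `Φ(x) = (|x-u|^{2H} - |x-v|^{2H}) / 2`. On `[u,v]` the
potential `Φ` is increasing, and on each half-line `(-∞,u]`, `[v,∞)` it is, up to sign and
reflection, the increment `y ↦ (y + (v-u))^{2H} - y^{2H}` of the convex (`2H ≥ 1`) or concave
(`2H ≤ 1`) function `y ↦ y^{2H}`, hence monotone. A `b`-adic interval of level `n` lies in one of
these three pieces, so `Φ` is monotone on it: the level-`(n+1)` covariances inside it share one
sign and telescope to the level-`n` covariance, and bounding each weight by the block maximum gives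
the inequality.
-/

open Finset Set

theorem Finset.sum_range_mul_eq_sum_sum {M : Type*} [AddCommMonoid M] (f : ℕ → M) (m k : ℕ) :
    ∑ j ∈ range (m * k), f j = ∑ i ∈ range m, ∑ r ∈ range k, f (i * k + r) := by
  induction m with
  | zero => simp
  | succ m ih => rw [Nat.succ_mul, sum_range_add, ih, sum_range_succ]

section Telescoping

variable {α : Type*} [Preorder α] {f : α → ℝ} {s : ℕ → α} {k : ℕ}

theorem MonotoneOn.sum_range_abs_sub_comp (hs : Monotone s)
    (hf : MonotoneOn f (Icc (s 0) (s k))) :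
    ∑ r ∈ range k, |f (s (r + 1)) - f (s r)| = |f (s k) - f (s 0)| := by
  have hmem : ∀ r ≤ k, s r ∈ Icc (s 0) (s k) := fun r hr => ⟨hs r.zero_le, hs hr⟩
  rw [abs_of_nonneg (sub_nonneg.2 (hf (hmem 0 k.zero_le) (hmem k le_rfl) (hs k.zero_le)))]
  refine (sum_congr rfl fun r hr => abs_of_nonneg (sub_nonneg.2 ?_)).trans
    (sum_range_sub (fun r => f (s r)) k)
  have hr := mem_range.1 hr
  exact hf (hmem r hr.le) (hmem (r + 1) hr) (hs r.le_succ)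

theorem AntitoneOn.sum_range_abs_sub_comp (hs : Monotone s)
    (hf : AntitoneOn f (Icc (s 0) (s k))) :
    ∑ r ∈ range k, |f (s (r + 1)) - f (s r)| = |f (s k) - f (s 0)| := by
  simpa only [Pi.neg_apply, neg_sub_neg, abs_sub_comm] using hf.neg.sum_range_abs_sub_comp hs

theorem sum_range_mul_abs_sub_comp_le (hs : Monotone s)
    (hf : MonotoneOn f (Icc (s 0) (s k)) ∨ AntitoneOn f (Icc (s 0) (s k)))
    {w : ℕ → ℝ} {M : ℝ} (hw : ∀ r < k, w r ≤ M) :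
    ∑ r ∈ range k, w r * |f (s (r + 1)) - f (s r)| ≤ M * |f (s k) - f (s 0)| :=
  calc ∑ r ∈ range k, w r * |f (s (r + 1)) - f (s r)|
      ≤ ∑ r ∈ range k, M * |f (s (r + 1)) - f (s r)| :=
        sum_le_sum fun r hr => mul_le_mul_of_nonneg_right (hw r (mem_range.1 hr)) (abs_nonneg _)
    _ = M * |f (s k) - f (s 0)| := by
        rw [← mul_sum]
        rcases hf with hf | hf <;> rw [hf.sum_range_abs_sub_comp hs]

end Telescoping

theorem ConvexOn.map_add_sub_map_le {s : Set ℝ} {f : ℝ → ℝ} (hf : ConvexOn ℝ s f) {x y d : ℝ}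
    (hx : x ∈ s) (hyd : y + d ∈ s) (hxy : x ≤ y) (hd : 0 ≤ d) :
    f (x + d) - f x ≤ f (y + d) - f y := by
  rcases hd.eq_or_lt with rfl | hd
  · simp
  rcases hxy.eq_or_lt with rfl | hxy
  · rfl
  have hxd : x + d ∈ s := hf.1.ordConnected.out hx hyd ⟨by linarith, by linarith⟩
  have hy : y ∈ s := hf.1.ordConnected.out hx hyd ⟨hxy.le, by linarith⟩
  have h₁ : slope f x (x + d) ≤ slope f x (y + d) :=
    hf.slope_mono hx ⟨hxd, by simp [hd.ne']⟩ ⟨hyd, by simp; linarith⟩ (by linarith)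
  have h₂ : slope f (y + d) x ≤ slope f (y + d) y :=
    hf.slope_mono hyd ⟨hx, by simp; linarith⟩ ⟨hy, by simp [hd.ne']⟩ hxy.le
  rw [slope_comm f (y + d) x, slope_comm f (y + d) y] at h₂
  have key := h₁.trans h₂
  simp only [slope_def_field, add_sub_cancel_left] at key
  exact (div_le_div_iff_of_pos_right hd).1 key

theorem ConcaveOn.map_add_sub_map_le {s : Set ℝ} {f : ℝ → ℝ} (hf : ConcaveOn ℝ s f) {x y d : ℝ}
    (hx : x ∈ s) (hyd : y + d ∈ s) (hxy : x ≤ y) (hd : 0 ≤ d) :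
    f (y + d) - f y ≤ f (x + d) - f x := by
  have := hf.neg.map_add_sub_map_le hx hyd hxy hd
  simp only [Pi.neg_apply] at this
  linarith

theorem monotoneOn_or_antitoneOn_rpow_add_sub_rpow {p d : ℝ} (hp : 0 ≤ p) (hd : 0 ≤ d) :
    MonotoneOn (fun y : ℝ => (y + d) ^ p - y ^ p) (Ici 0) ∨
      AntitoneOn (fun y : ℝ => (y + d) ^ p - y ^ p) (Ici 0) := by
  have hyd : ∀ y ∈ Ici (0 : ℝ), y + d ∈ Ici (0 : ℝ) := fun y hy => add_nonneg hy hd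
  rcases le_total 1 p with hp1 | hp1
  · exact .inl fun x hx y hy hxy => (convexOn_rpow hp1).map_add_sub_map_le hx (hyd y hy) hxy hd
  · exact .inr fun x hx y hy hxy =>
      (Real.concaveOn_rpow hp hp1).map_add_sub_map_le hx (hyd y hy) hxy hd

/-- Up to an additive constant, `covPotential (2 * H) u v x = E[W(x) (W(v) - W(u))]`. -/
noncomputable def covPotential (p u v x : ℝ) : ℝ := (|x - u| ^ p - |x - v| ^ p) / 2

section covPotential

variable {p u v : ℝ}

theorem covPotential_monotoneOn_Icc (hp : 0 ≤ p) : MonotoneOn (covPotential p u v) (Icc u v) := by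
  intro x hx y hy hxy
  unfold covPotential
  rw [abs_of_nonneg (sub_nonneg.2 hx.1), abs_of_nonneg (sub_nonneg.2 hy.1),
    abs_of_nonpos (sub_nonpos.2 hx.2), abs_of_nonpos (sub_nonpos.2 hy.2)]
  have hu : (x - u) ^ p ≤ (y - u) ^ p := by gcongr; linarith [hx.1]
  have hv : (-(y - v)) ^ p ≤ (-(x - v)) ^ p := by gcongr; linarith [hy.2]
  linarith

theorem covPotential_of_le_left (huv : u ≤ v) {x : ℝ} (hx : x ≤ u) :
    covPotential p u v x = -((u - x + (v - u)) ^ p - (u - x) ^ p) / 2 := by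
  unfold covPotential
  rw [abs_of_nonpos (by linarith), abs_of_nonpos (by linarith)]
  ring_nf

theorem covPotential_of_right_le (huv : u ≤ v) {x : ℝ} (hx : v ≤ x) :
    covPotential p u v x = ((x - v + (v - u)) ^ p - (x - v) ^ p) / 2 := by
  unfold covPotential
  rw [abs_of_nonneg (by linarith), abs_of_nonneg (by linarith)]
  ring_nf

theorem covPotential_monotoneOn_or_antitoneOn_Iic (hp : 0 ≤ p) (huv : u ≤ v) :
    MonotoneOn (covPotential p u v) (Iic u) ∨ AntitoneOn (covPotential p u v) (Iic u) := by
  refine (monotoneOn_or_antitoneOn_rpow_add_sub_rpow hp (sub_nonneg.2 huv)).imp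
    (fun hg x hx y hy hxy => ?_) (fun hg x hx y hy hxy => ?_) <;>
  · have := hg (mem_Ici.2 (sub_nonneg.2 hy)) (mem_Ici.2 (sub_nonneg.2 hx)) (by linarith)
    rw [covPotential_of_le_left huv hx, covPotential_of_le_left huv hy]
    linarith

theorem covPotential_monotoneOn_or_antitoneOn_Ici (hp : 0 ≤ p) (huv : u ≤ v) :
    MonotoneOn (covPotential p u v) (Ici v) ∨ AntitoneOn (covPotential p u v) (Ici v) := by
  refine (monotoneOn_or_antitoneOn_rpow_add_sub_rpow hp (sub_nonneg.2 huv)).imp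
    (fun hg x hx y hy hxy => ?_) (fun hg x hx y hy hxy => ?_) <;>
  · have := hg (mem_Ici.2 (sub_nonneg.2 hx)) (mem_Ici.2 (sub_nonneg.2 hy)) (by linarith)
    rw [covPotential_of_right_le huv hx, covPotential_of_right_le huv hy]
    linarith

theorem covPotential_monotoneOn_or_antitoneOn (hp : 0 ≤ p) (huv : u ≤ v) {S : Set ℝ}
    (hS : S ⊆ Iic u ∨ S ⊆ Icc u v ∨ S ⊆ Ici v) :
    MonotoneOn (covPotential p u v) S ∨ AntitoneOn (covPotential p u v) S := by
  rcases hS with hS | hS | hS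
  · exact (covPotential_monotoneOn_or_antitoneOn_Iic hp huv).imp (·.mono hS) (·.mono hS)
  · exact .inl ((covPotential_monotoneOn_Icc hp).mono hS)
  · exact (covPotential_monotoneOn_or_antitoneOn_Ici hp huv).imp (·.mono hS) (·.mono hS)

end covPotential

theorem Icc_div_subset_Iic_or_Icc_or_Ici {N : ℝ} (hN : 0 < N) (i a c : ℕ) :
    Icc (i / N) ((i + 1) / N) ⊆ Iic (a / N) ∨
      Icc (i / N) ((i + 1) / N) ⊆ Icc (a / N) (c / N) ∨
      Icc (i / N) ((i + 1) / N) ⊆ Ici (c / N) := by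
  have hdiv {m n : ℝ} (h : m ≤ n) : m / N ≤ n / N := div_le_div_of_nonneg_right h hN.le
  rcases lt_or_ge i a with hia | hai
  · exact .inl fun x hx => hx.2.trans (hdiv (by exact_mod_cast hia))
  rcases lt_or_ge i c with hic | hci
  · exact .inr (.inl fun x hx =>
      ⟨(hdiv (by exact_mod_cast hai)).trans hx.1, hx.2.trans (hdiv (by exact_mod_cast hic))⟩)
  · exact .inr (.inr fun x hx => (hdiv (by exact_mod_cast hci)).trans hx.1)

theorem sum_range_mul_abs_sub_le_of_Icc_div {f : ℝ → ℝ} {N : ℝ} (hN : 0 < N) {b i : ℕ}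
    (hb : 0 < b)
    (hf : MonotoneOn f (Icc (i / N) ((i + 1) / N)) ∨ AntitoneOn f (Icc (i / N) ((i + 1) / N)))
    {w : ℕ → ℝ} {M : ℝ} (hw : ∀ r < b, w r ≤ M) :
    ∑ r ∈ range b, w r * |f ((↑(i * b + r) + 1) / (N * b)) - f (↑(i * b + r) / (N * b))|
      ≤ M * |f ((i + 1) / N) - f (i / N)| := by
  set s : ℕ → ℝ := fun r => ↑(i * b + r) / (N * b)
  have hb' : (0 : ℝ) < b := by exact_mod_cast hb
  have hs : Monotone s := fun r r' h => by simp only [s]; gcongr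
  have hs0 : s 0 = i / N := by simp only [s]; push_cast; field_simp; ring
  have hsb : s b = (i + 1) / N := by simp only [s]; push_cast; field_simp
  have hsucc (r : ℕ) : s (r + 1) = (↑(i * b + r) + 1) / (N * b) := by simp only [s]; push_cast; ring
  simp only [← hsucc]
  rw [← hs0, ← hsb] at hf ⊢
  exact sum_range_mul_abs_sub_comp_le hs hf hw

theorem fbm_covariance_coarsening_general (b : ℕ) (hb : 2 ≤ b)
    (H : ℝ) (hH0 : 0 < H)
    (RH : ℝ → ℝ → ℝ → ℝ → ℝ)
    (hRH : ∀ u v s t : ℝ, RH u v s t =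
      (1 / 2) * (|v - s| ^ (2 * H) + |u - t| ^ (2 * H)
        - |v - t| ^ (2 * H) - |u - s| ^ (2 * H)))
    (n : ℕ) (u v : ℝ) (huv : u ≤ v)
    (hu' : ∃ iu : ℕ, u * (b : ℝ) ^ n = iu) (hv' : ∃ iv : ℕ, v * (b : ℝ) ^ n = iv)
    (μ : ℕ → ℝ) :
    ∑ j ∈ Finset.range (b ^ (n + 1)),
        |μ (j + 1)| * |RH ((j : ℝ) / (b : ℝ) ^ (n + 1))
          (((j : ℝ) + 1) / (b : ℝ) ^ (n + 1)) u v|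
      ≤ ∑ i ∈ Finset.range (b ^ n),
          (⨆ r : Fin b, |μ (i * b + (r : ℕ) + 1)|) *
            |RH ((i : ℝ) / (b : ℝ) ^ n) (((i : ℝ) + 1) / (b : ℝ) ^ n) u v| := by
  have hb0 : 0 < b := by omega
  have hN : (0 : ℝ) < (b : ℝ) ^ n := pow_pos (Nat.cast_pos.2 hb0) n
  have hRH' (s t : ℝ) : RH s t u v = covPotential (2 * H) u v t - covPotential (2 * H) u v s := by
    rw [hRH]; unfold covPotential; ring
  obtain ⟨iu, hiu⟩ := hu'
  obtain ⟨iv, hiv⟩ := hv'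
  obtain rfl : u = iu / (b : ℝ) ^ n := eq_div_of_mul_eq hN.ne' hiu
  obtain rfl : v = iv / (b : ℝ) ^ n := eq_div_of_mul_eq hN.ne' hiv
  simp only [hRH']
  rw [pow_succ, pow_succ, sum_range_mul_eq_sum_sum]
  refine sum_le_sum fun i _ => sum_range_mul_abs_sub_le_of_Icc_div hN hb0
    (covPotential_monotoneOn_or_antitoneOn (by positivity) huv
      (Icc_div_subset_Iic_or_Icc_or_Ici hN i iu iv)) fun r hr => ?_
  exact le_ciSup (f := fun r : Fin b => |μ (i * b + (r : ℕ) + 1)|) (Finite.bddAbove_range _) ⟨r, hr⟩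

/-- Lemma 3.9 of the paper (coarsening inequality): for an interval `[u,v]` with
`b`-adic endpoints of level `n`, the weighted sum of absolute covariances of level
`n+1` increments against the increment on `[u,v]` is dominated by the corresponding
sum over level-`n` increments with the weights replaced by blockwise maxima. -/
theorem fbm_covariance_coarsening (b : ℕ) (hb : 2 ≤ b)
    (H : ℝ) (hH0 : 0 < H) (hH1 : H < 1)
    (RH : ℝ → ℝ → ℝ → ℝ → ℝ)
    (hRH : ∀ u v s t : ℝ, RH u v s t =
      (1 / 2) * (|v - s| ^ (2 * H) + |u - t| ^ (2 * H)
        - |v - t| ^ (2 * H) - |u - s| ^ (2 * H)))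
    (n : ℕ) (u v : ℝ) (hu : 0 ≤ u) (huv : u ≤ v) (hv : v ≤ 1)
    (hu' : ∃ iu : ℕ, u * (b : ℝ) ^ n = iu) (hv' : ∃ iv : ℕ, v * (b : ℝ) ^ n = iv)
    (μ : ℕ → ℝ) :
    ∑ j ∈ Finset.range (b ^ (n + 1)),
        |μ (j + 1)| * |RH ((j : ℝ) / (b : ℝ) ^ (n + 1))
          (((j : ℝ) + 1) / (b : ℝ) ^ (n + 1)) u v|
      ≤ ∑ i ∈ Finset.range (b ^ n),
          (⨆ r : Fin b, |μ (i * b + (r : ℕ) + 1)|) *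
            |RH ((i : ℝ) / (b : ℝ) ^ n) (((i : ℝ) + 1) / (b : ℝ) ^ n) u v| :=
  fbm_covariance_coarsening_general b hb H hH0 RH hRH n u v huv hu' hv' μ
end

section
/- Let b ≥ 2 be an even integer and let α ∈ (1/b, 1). Let Γ(u,v) := min(u,v) − u·v for u,v ∈ [0,1] (the covariance of the standard Brownian bridge), and define c(s,t) := ∑_{m=0}^∞ ∑_{n=0}^∞ α^{m+n} · Γ(⟨b^m s⟩, ⟨bⁿ t⟩). Then for every t ∈ [0,1], 2·c(1/2, t) = ∑_{n=0}^∞ αⁿ · min(⟨bⁿ t⟩, 1 − ⟨bⁿ t⟩); that is, the function t ↦ 2·c(1/2, t) is the Takagi–van der Waerden function with parameters b and α. -/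
/-!
For even `b` and `m ≥ 1`, `b ^ m / 2` is an integer, so `⟨b ^ m / 2⟩ = 0` and every row `m ≥ 1`
of the double series for `c (1/2) t` vanishes, since `Γ(0, ·) = 0` on `[0, 1)`. The row `m = 0` is
`∑ αⁿ Γ(1/2, ⟨bⁿ t⟩)`, and `Γ(1/2, x) = min(x, 1 - x) / 2` is half the tent map.
-/

theorem Int.fract_pow_mul_half_of_even {b : ℕ} (hb : Even b) {m : ℕ} (hm : m ≠ 0) :
    Int.fract ((b : ℝ) ^ m * (1 / 2)) = 0 := by
  obtain ⟨k, rfl⟩ := hb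
  obtain ⟨m, rfl⟩ := Nat.exists_eq_succ_of_ne_zero hm
  have hnat : ((k + k : ℕ) : ℝ) ^ (m + 1) * (1 / 2) = ((k * (k + k) ^ m : ℕ) : ℝ) := by
    push_cast
    ring
  rw [hnat, Int.fract_natCast]

theorem min_half_sub_half_mul (x : ℝ) : min (1 / 2) x - 1 / 2 * x = min x (1 - x) / 2 := by
  rcases le_or_gt x (1 / 2) with h | h
  · rw [min_eq_right h, min_eq_left (by linarith)]
    ring
  · rw [min_eq_left h.le, min_eq_right (by linarith)]
    ring

theorem covariance_is_takagi_general (b : ℕ) (hbe : Even b)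
    (α : ℝ)
    (Γ : ℝ → ℝ → ℝ) (hΓ : ∀ u v : ℝ, Γ u v = min u v - u * v)
    (c : ℝ → ℝ → ℝ)
    (hc : ∀ s t : ℝ, c s t = ∑' m : ℕ, ∑' n : ℕ,
      α ^ (m + n) * Γ (Int.fract ((b : ℝ) ^ m * s)) (Int.fract ((b : ℝ) ^ n * t))) :
    ∀ t ∈ Set.Icc (0 : ℝ) 1,
      2 * c (1 / 2) t =
        ∑' n : ℕ, α ^ n *
          min (Int.fract ((b : ℝ) ^ n * t)) (1 - Int.fract ((b : ℝ) ^ n * t)) := by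
  intro t _
  have hrow : ∀ m : ℕ, m ≠ 0 → ∑' n : ℕ, α ^ (m + n) *
      Γ (Int.fract ((b : ℝ) ^ m * (1 / 2))) (Int.fract ((b : ℝ) ^ n * t)) = 0 := by
    intro m hm
    simp only [Int.fract_pow_mul_half_of_even hbe hm, hΓ, min_eq_left (Int.fract_nonneg _),
      zero_mul, sub_zero, mul_zero, tsum_zero]
  have hhalf : Int.fract ((b : ℝ) ^ 0 * (1 / 2)) = 1 / 2 := by
    rw [pow_zero, one_mul, Int.fract_eq_self]
    norm_num
  rw [hc, tsum_eq_single 0 hrow, ← tsum_mul_left]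
  refine tsum_congr fun n => ?_
  rw [hhalf, hΓ, min_half_sub_half_mul, zero_add]
  ring

/-- Proposition 2.4 of the paper (second part): for even `b` and `H = 1/2`, the
function `t ↦ 2 c(1/2, t)` is the Takagi–van der Waerden function with parameters
`b` and `α`. -/
theorem covariance_is_takagi (b : ℕ) (hb : 2 ≤ b) (hbe : Even b)
    (α : ℝ) (hα1 : 1 / (b : ℝ) < α) (hα2 : α < 1)
    (Γ : ℝ → ℝ → ℝ) (hΓ : ∀ u v : ℝ, Γ u v = min u v - u * v)
    (c : ℝ → ℝ → ℝ)
    (hc : ∀ s t : ℝ, c s t = ∑' m : ℕ, ∑' n : ℕ,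
      α ^ (m + n) * Γ (Int.fract ((b : ℝ) ^ m * s)) (Int.fract ((b : ℝ) ^ n * t))) :
    ∀ t ∈ Set.Icc (0 : ℝ) 1,
      2 * c (1 / 2) t =
        ∑' n : ℕ, α ^ n *
          min (Int.fract ((b : ℝ) ^ n * t)) (1 - Int.fract ((b : ℝ) ^ n * t)) :=
  covariance_is_takagi_general b hbe α Γ hΓ c hc
end
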